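/- arXiv:2108.01157 — 8 statements merged into one kernel-verified Lean document; each statement's English description precedes it below -/
import Mathlib

section
/- Let V be a right Banach ℍ-module with dim_ℍ V ≥ 2 whose continuous dual separates points (i.e., for every nonzero x ∈ V there exists a bounded right ℍ-linear functional f : V → ℍ with f(x) ≠ 0), and let T ∈ B(V). Then σ_S(T + A) ⊆ σ_S(A) for every A ∈ B(V) if and only if T = 0. -/
/-!
Quaternionic setting: `ℍ` is the real quaternions.  A right Banach `ℍ`-module is
formalized as a real Banach space `V` together with a compatible `Module ℍᵐᵒᵖ V`
structure (right `ℍ`-action) satisfying `‖x • q‖ = ‖x‖ * |q|`; bounded right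
`ℍ`-linear operators are the continuous `ℍᵐᵒᵖ`-linear maps `V →L[ℍᵐᵒᵖ] V`.
-/

open MulOpposite

notation "ℍ" => Quaternion ℝ

section Defs

variable {W : Type*} [NormedAddCommGroup W] [Module ℍᵐᵒᵖ W] [Module ℝ W]
  [SMulCommClass ℍᵐᵒᵖ ℝ W] [ContinuousConstSMul ℝ W]

/-- `Q_q(T) = T² − 2 Re(q) T + |q|² I`. -/
noncomputable def Qs (T : W →L[ℍᵐᵒᵖ] W) (q : ℍ) : W →L[ℍᵐᵒᵖ] W :=
  T * T - (2 * q.re) • T + (‖q‖ ^ 2) • (1 : W →L[ℍᵐᵒᵖ] W)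

/-- The S-resolvent set: `q` such that `Q_q(T)` is bijective with bounded inverse,
i.e. invertible in the ring `B(W)`. -/
noncomputable def sResolvent (T : W →L[ℍᵐᵒᵖ] W) : Set ℍ :=
  {q | IsUnit (Qs T q)}

/-- The S-spectrum `σ_S(T) = ℍ \ ρ_S(T)`. -/
noncomputable def sSpectrum (T : W →L[ℍᵐᵒᵖ] W) : Set ℍ :=
  {q | ¬ IsUnit (Qs T q)}

/-- A compact operator: the image of the closed unit ball is relatively compact. -/
def IsCompactOp (K : W →L[ℍᵐᵒᵖ] W) : Prop :=
  IsCompact (closure (⇑K '' Metric.closedBall (0 : W) 1))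

/-- `S` is a quasi-inverse of `T` if `S T = I - K₁` and `T S = I - K₂` with `K₁, K₂` compact. -/
def IsQuasiInverse (S T : W →L[ℍᵐᵒᵖ] W) : Prop :=
  ∃ K₁ K₂ : W →L[ℍᵐᵒᵖ] W, IsCompactOp K₁ ∧ IsCompactOp K₂ ∧
    S * T = 1 - K₁ ∧ T * S = 1 - K₂

/-- The essential S-spectrum: `q` such that `Q_q(T)` admits no quasi-inverse. -/
noncomputable def essSpectrum (T : W →L[ℍᵐᵒᵖ] W) : Set ℍ :=
  {q | ¬ ∃ S : W →L[ℍᵐᵒᵖ] W, IsQuasiInverse S (Qs T q)}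

/-- The Weyl S-spectrum: `⋂ σ_S(T + K)` over all compact `K`. -/
noncomputable def weylSpectrum (T : W →L[ℍᵐᵒᵖ] W) : Set ℍ :=
  ⋂ K ∈ {K : W →L[ℍᵐᵒᵖ] W | IsCompactOp K}, sSpectrum (T + K)

/-- The 2-sphere `[q] = {h q h⁻¹ : h ∈ ℍ \ {0}}`. -/
def qSphere (q : ℍ) : Set ℍ := {p | ∃ h : ℍ, h ≠ 0 ∧ p = h * q * h⁻¹}

/-- Minimum modulus `μ(T) = inf {‖T x‖ : ‖x‖ = 1}`. -/
noncomputable def muMin (T : W →L[ℍᵐᵒᵖ] W) : ℝ :=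
  sInf {c : ℝ | ∃ x : W, ‖x‖ = 1 ∧ c = ‖T x‖}

/-- Operator norm of a bounded right `ℍ`-linear operator. -/
noncomputable def opNorm (T : W →L[ℍᵐᵒᵖ] W) : ℝ :=
  sInf {c : ℝ | 0 ≤ c ∧ ∀ x : W, ‖T x‖ ≤ c * ‖x‖}

/-- Restriction of `T` to an invariant submodule. -/
noncomputable def restrictOp (T : W →L[ℍᵐᵒᵖ] W) (M : Submodule ℍᵐᵒᵖ W)
    (h : ∀ x ∈ M, T x ∈ M) : ↥M →L[ℍᵐᵒᵖ] ↥M where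
  toLinearMap := (T : W →ₗ[ℍᵐᵒᵖ] W).restrict h
  cont := Continuous.subtype_mk (T.continuous.comp continuous_subtype_val) _

end Defs

section Sub

variable {V : Type*} [NormedAddCommGroup V] [NormedSpace ℝ V]
  [Module ℍᵐᵒᵖ V] [IsScalarTower ℝ ℍᵐᵒᵖ V] [SMulCommClass ℍᵐᵒᵖ ℝ V]

instance (M : Submodule ℍᵐᵒᵖ V) : SMulCommClass ℍᵐᵒᵖ ℝ ↥M := by
  constructor
  intro q r x
  apply Subtype.ext
  simp only [Submodule.coe_smul_of_tower, SetLike.val_smul]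
  exact smul_comm q r (x : V)

instance (M : Submodule ℍᵐᵒᵖ V) : ContinuousConstSMul ℝ ↥M := by
  constructor
  intro r
  have h : Continuous fun x : ↥M => r • (x : V) :=
    (continuous_const_smul r).comp continuous_subtype_val
  exact Continuous.subtype_mk h _

/-- `q` is a right eigenvalue of finite type of `T`: `V` is the direct sum of two closed
`T`-invariant right `ℍ`-submodules `M₁`, `M₂` with `M₁` finite-dimensional over `ℍ`,
`σ_S(T|M₁) ∩ σ_S(T|M₂) = ∅` and `σ_S(T|M₁) = [q]`. -/
noncomputable def IsFiniteTypeEigenvalue (T : V →L[ℍᵐᵒᵖ] V) (q : ℍ) : Prop :=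
  ∃ (M₁ M₂ : Submodule ℍᵐᵒᵖ V) (h₁ : ∀ x ∈ M₁, T x ∈ M₁) (h₂ : ∀ x ∈ M₂, T x ∈ M₂),
    IsClosed (M₁ : Set V) ∧ IsClosed (M₂ : Set V) ∧ IsCompl M₁ M₂ ∧
    FiniteDimensional ℍᵐᵒᵖ ↥M₁ ∧
    sSpectrum (restrictOp T M₁ h₁) ∩ sSpectrum (restrictOp T M₂ h₂) = ∅ ∧
    sSpectrum (restrictOp T M₁ h₁) = qSphere q

end Sub

/-!
If `T v ≠ 0`, pick a bounded functional `f` with `f v = 1` and `f (T v) ≠ 0` and put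
`A = I - (v + T v) f`. Since `1 - f (v + T v) = -f (T v) ≠ 0`, the rank-one perturbation `A` of
the identity is invertible, while `(T + A) v = 0`. As `Q_0(B) = B²` is invertible exactly when `B`
is, `0 ∈ σ_S(T + A) \ σ_S(A)`.
-/

lemma zero_mem_sSpectrum_iff {W : Type*} [NormedAddCommGroup W] [Module ℍᵐᵒᵖ W] [Module ℝ W]
    [SMulCommClass ℍᵐᵒᵖ ℝ W] [ContinuousConstSMul ℝ W] (B : W →L[ℍᵐᵒᵖ] W) :
    0 ∈ sSpectrum B ↔ ¬IsUnit B := by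
  simp [sSpectrum, Qs, Quaternion.re_zero, ← sq]

lemma not_isUnit_of_apply_eq_zero {R M : Type*} [Semiring R] [AddCommMonoid M] [Module R M]
    [TopologicalSpace M] [ContinuousAdd M] {B : M →L[R] M} {v : M} (hv : v ≠ 0) (hBv : B v = 0) :
    ¬IsUnit B := fun hB =>
  hv <| ((Module.End.isUnit_iff _).1 (hB.map ContinuousLinearMap.toLinearMapRingHom)).injective
    (by simpa using hBv)

lemma exists_apply_eq_one_and_apply_ne_zero {D M : Type*} [DivisionRing D] [TopologicalSpace D]
    [IsTopologicalRing D] [AddCommGroup M] [TopologicalSpace M] [Module Dᵐᵒᵖ M]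
    (hsep : ∀ x : M, x ≠ 0 → ∃ f : M →L[Dᵐᵒᵖ] D, f x ≠ 0) {v w : M} (hv : v ≠ 0) (hw : w ≠ 0) :
    ∃ f : M →L[Dᵐᵒᵖ] D, f v = 1 ∧ f w ≠ 0 := by
  obtain ⟨g, hgv⟩ : ∃ g : M →L[Dᵐᵒᵖ] D, g v = 1 := by
    obtain ⟨g, hg⟩ := hsep v hv
    exact ⟨(g v)⁻¹ • g, inv_mul_cancel₀ hg⟩
  by_cases hgw : g w = 0
  · obtain ⟨h, hhw⟩ := hsep w hw
    -- `h - h v • g` vanishes at `v` and agrees with `h` at `w`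
    refine ⟨g + (h - h v • g), ?_, ?_⟩
    · simp [hgv]
    · simpa [hgw] using hhw
  · exact ⟨g, hgv, hgw⟩

section RankOne

variable {V : Type*} [NormedAddCommGroup V] [NormedSpace ℝ V] [Module ℍᵐᵒᵖ V]
  [IsScalarTower ℝ ℍᵐᵒᵖ V]

noncomputable def rankOne (f : V →L[ℍᵐᵒᵖ] ℍ) (y : V) : V →L[ℍᵐᵒᵖ] V where
  toFun z := op (f z) • y
  map_add' a b := by rw [map_add, op_add, add_smul]
  map_smul' q z := by
    rw [map_smul, RingHom.id_apply, ← op_unop q, op_smul_eq_mul, op_mul, mul_smul]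
  cont := by
    -- `p ↦ y · p` is `ℝ`-linear on the finite-dimensional space `ℍ`, hence continuous
    let smulY : ℍ →ₗ[ℝ] V :=
      ((LinearMap.toSpanSingleton ℍᵐᵒᵖ V y).restrictScalars ℝ).comp
        (opLinearEquiv ℝ).toLinearMap
    exact smulY.continuous_of_finiteDimensional.comp f.continuous

@[simp] lemma rankOne_apply (f : V →L[ℍᵐᵒᵖ] ℍ) (y z : V) :
    rankOne f y z = op (f z) • y := rfl

lemma isUnit_one_sub_rankOne {f : V →L[ℍᵐᵒᵖ] ℍ} {y : V} (h : 1 - f y ≠ 0) :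
    IsUnit (1 - rankOne f y) := by
  set c := (1 - f y)⁻¹
  have hc_left : (1 - f y) * c = 1 := mul_inv_cancel₀ h
  have hc_right : 1 + c * f y = c := by
    rw [← inv_mul_cancel₀ h, mul_sub, mul_one, sub_add_cancel]
  have one_sub_smul : ∀ a : ℍ, y - op a • y = op (1 - a) • y := fun a => by
    rw [op_sub, op_one, sub_smul, one_smul]
  have one_add_smul : ∀ a : ℍ, y + op a • y = op (1 + a) • y := fun a => by
    rw [op_add, op_one, add_smul, one_smul]
  refine isUnit_iff_exists.2 ⟨1 + rankOne (c • f) y, ?_, ?_⟩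
  · ext z
    simp only [mul_apply_eq_comp, add_apply, sub_apply, one_apply_eq_self, rankOne_apply,
      map_add, map_smul, smul_apply, smul_eq_mul]
    rw [one_sub_smul, ← mul_smul, ← op_mul, ← mul_assoc, hc_left, one_mul, sub_add_cancel]
  · ext z
    simp only [mul_apply_eq_comp, add_apply, sub_apply, one_apply_eq_self, rankOne_apply,
      map_sub, map_smul, smul_apply, smul_eq_mul]
    rw [one_add_smul, hc_right, ← mul_smul, ← op_mul, add_sub_cancel_right]

lemma exists_isUnit_not_isUnit_add (hsep : ∀ x : V, x ≠ 0 → ∃ f : V →L[ℍᵐᵒᵖ] ℍ, f x ≠ 0)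
    {T : V →L[ℍᵐᵒᵖ] V} (hT : T ≠ 0) : ∃ A : V →L[ℍᵐᵒᵖ] V, IsUnit A ∧ ¬IsUnit (T + A) := by
  obtain ⟨v, hTv⟩ : ∃ v, T v ≠ 0 := by
    by_contra! h
    exact hT (ContinuousLinearMap.ext h)
  have hv : v ≠ 0 := fun h => hTv (by rw [h, map_zero])
  obtain ⟨f, hfv, hfTv⟩ := exists_apply_eq_one_and_apply_ne_zero hsep hv hTv
  refine ⟨1 - rankOne f (v + T v), isUnit_one_sub_rankOne ?_, not_isUnit_of_apply_eq_zero hv ?_⟩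
  · simpa [hfv] using hfTv
  · simp [hfv]

end RankOne

theorem stmt0_general {V : Type*} [NormedAddCommGroup V] [NormedSpace ℝ V]
    [Module ℍᵐᵒᵖ V] [IsScalarTower ℝ ℍᵐᵒᵖ V] [SMulCommClass ℍᵐᵒᵖ ℝ V]
    (hsep : ∀ x : V, x ≠ 0 → ∃ f : V →L[ℍᵐᵒᵖ] ℍ, f x ≠ 0)
    (T : V →L[ℍᵐᵒᵖ] V) :
    (∀ A : V →L[ℍᵐᵒᵖ] V, sSpectrum (T + A) ⊆ sSpectrum A) ↔ T = 0 := by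
  refine ⟨fun h => ?_, fun hT A => by rw [hT, zero_add]⟩
  by_contra hT
  obtain ⟨A, hA, hTA⟩ := exists_isUnit_not_isUnit_add hsep hT
  exact (zero_mem_sSpectrum_iff A).1 (h A ((zero_mem_sSpectrum_iff _).2 hTA)) hA

theorem stmt0 {V : Type*} [NormedAddCommGroup V] [NormedSpace ℝ V] [CompleteSpace V]
    [Module ℍᵐᵒᵖ V] [IsScalarTower ℝ ℍᵐᵒᵖ V] [SMulCommClass ℍᵐᵒᵖ ℝ V]
    (hnorm : ∀ (x : V) (q : ℍ), ‖op q • x‖ = ‖x‖ * ‖q‖)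
    (hdim : 2 ≤ Module.rank ℍᵐᵒᵖ V)
    (hsep : ∀ x : V, x ≠ 0 → ∃ f : V →L[ℍᵐᵒᵖ] ℍ, f x ≠ 0)
    (T : V →L[ℍᵐᵒᵖ] V) :
    (∀ A : V →L[ℍᵐᵒᵖ] V, sSpectrum (T + A) ⊆ sSpectrum A) ↔ T = 0 :=
  stmt0_general hsep T
end

section
/- Let V be a right Banach ℍ-module, T ∈ B(V), and let P₁ ∈ B(V) satisfy P₁² = P₁ and T P₁ = P₁ T; set P₂ := I − P₁. Then the ranges R(P₁) and R(P₂) are closed T-invariant right ℍ-submodules of V (hence themselves right Banach ℍ-modules), the restrictions T|_{R(P₁)} and T|_{R(P₂)} are bounded right ℍ-linear operators, and σ_e^S(T) = σ_e^S(T|_{R(P₁)}) ∪ σ_e^S(T|_{R(P₂)}). -/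
/-!
Quaternionic setting: `ℍ` is the real quaternions.  A right Banach `ℍ`-module is
formalized as a real Banach space `V` together with a compatible `Module ℍᵐᵒᵖ V`
structure (right `ℍ`-action) satisfying `‖x • q‖ = ‖x‖ * |q|`; bounded right
`ℍ`-linear operators are the continuous `ℍᵐᵒᵖ`-linear maps `V →L[ℍᵐᵒᵖ] V`.
-/

open MulOpposite

/-!
Since `P₁` commutes with `T`, it commutes with `Q_q(T)`, so with respect to
`V = R(P₁) ⊕ R(P₂)` the operator `Q_q(T)` is diagonal with blocks `Q_q(T|R(Pᵢ))`.
A quasi-inverse `S` of `Q_q(T)` compresses to the quasi-inverses `Pᵢ S|R(Pᵢ)` of the blocks,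
and quasi-inverses `S₁, S₂` of the blocks assemble to the quasi-inverse `S₁ P₁ + S₂ P₂`
of `Q_q(T)`; the error terms stay compact because compact operators form a two-sided ideal.
-/

open ContinuousLinearMap

section QuasiInverse

variable {E F F₁ F₂ : Type*}
  [NormedAddCommGroup E] [NormedSpace ℝ E] [Module ℍᵐᵒᵖ E] [IsScalarTower ℝ ℍᵐᵒᵖ E]
  [NormedAddCommGroup F] [NormedSpace ℝ F] [Module ℍᵐᵒᵖ F] [IsScalarTower ℝ ℍᵐᵒᵖ F]
  [NormedAddCommGroup F₁] [NormedSpace ℝ F₁] [Module ℍᵐᵒᵖ F₁] [IsScalarTower ℝ ℍᵐᵒᵖ F₁]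
  [NormedAddCommGroup F₂] [NormedSpace ℝ F₂] [Module ℍᵐᵒᵖ F₂] [IsScalarTower ℝ ℍᵐᵒᵖ F₂]

theorem isCompactOp_iff_isCompactOperator (K : E →L[ℍᵐᵒᵖ] E) :
    IsCompactOp K ↔ IsCompactOperator K :=
  (isCompactOperator_iff_isCompact_closure_image_closedBall
    (K.restrictScalars ℝ : E →ₗ[ℝ] E) one_pos).symm

theorem IsCompactOp.comp_comp {K : F →L[ℍᵐᵒᵖ] F} (hK : IsCompactOp K) (A : F →L[ℍᵐᵒᵖ] E)
    (B : E →L[ℍᵐᵒᵖ] F) : IsCompactOp (A ∘L K ∘L B) := by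
  rw [isCompactOp_iff_isCompactOperator] at hK ⊢
  exact (hK.comp_clm B).clm_comp A

theorem IsCompactOp.add {K L : E →L[ℍᵐᵒᵖ] E} (hK : IsCompactOp K) (hL : IsCompactOp L) :
    IsCompactOp (K + L) := by
  rw [isCompactOp_iff_isCompactOperator] at hK hL ⊢
  exact hK.add hL

theorem IsQuasiInverse.compress {S Q : E →L[ℍᵐᵒᵖ] E} {Q' : F →L[ℍᵐᵒᵖ] F}
    {ι : F →L[ℍᵐᵒᵖ] E} {π : E →L[ℍᵐᵒᵖ] F} (hS : IsQuasiInverse S Q) (hπι : π ∘L ι = 1)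
    (hι : ι ∘L Q' = Q ∘L ι) (hπ : π ∘L Q = Q' ∘L π) :
    IsQuasiInverse (π ∘L S ∘L ι) Q' := by
  obtain ⟨K₁, K₂, hK₁, hK₂, hSQ, hQS⟩ := hS
  refine ⟨π ∘L K₁ ∘L ι, π ∘L K₂ ∘L ι, hK₁.comp_comp π ι, hK₂.comp_comp π ι, ?_, ?_⟩
  · calc (π ∘L S ∘L ι) * Q' = π ∘L (S * Q) ∘L ι := by
          simp only [mul_def, comp_assoc, hι]
      _ = 1 - π ∘L K₁ ∘L ι := by
          rw [hSQ, sub_comp, comp_sub, one_def, id_comp, hπι, one_def]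
  · calc Q' * (π ∘L S ∘L ι) = π ∘L (Q * S) ∘L ι := by
          simp only [mul_def, ← comp_assoc, hπ]
      _ = 1 - π ∘L K₂ ∘L ι := by
          rw [hQS, sub_comp, comp_sub, one_def, id_comp, hπι, one_def]

theorem IsQuasiInverse.of_decomposition {Q : E →L[ℍᵐᵒᵖ] E}
    {S₁ Q₁ : F₁ →L[ℍᵐᵒᵖ] F₁} {S₂ Q₂ : F₂ →L[ℍᵐᵒᵖ] F₂}
    {ι₁ : F₁ →L[ℍᵐᵒᵖ] E} {π₁ : E →L[ℍᵐᵒᵖ] F₁} {ι₂ : F₂ →L[ℍᵐᵒᵖ] E} {π₂ : E →L[ℍᵐᵒᵖ] F₂}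
    (h₁ : IsQuasiInverse S₁ Q₁) (h₂ : IsQuasiInverse S₂ Q₂)
    (hι₁ : ι₁ ∘L Q₁ = Q ∘L ι₁) (hπ₁ : π₁ ∘L Q = Q₁ ∘L π₁)
    (hι₂ : ι₂ ∘L Q₂ = Q ∘L ι₂) (hπ₂ : π₂ ∘L Q = Q₂ ∘L π₂) (hsum : ι₁ ∘L π₁ + ι₂ ∘L π₂ = 1) :
    IsQuasiInverse (ι₁ ∘L S₁ ∘L π₁ + ι₂ ∘L S₂ ∘L π₂) Q := by
  obtain ⟨K₁, K₂, hK₁, hK₂, hSQ₁, hQS₁⟩ := h₁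
  obtain ⟨K₃, K₄, hK₃, hK₄, hSQ₂, hQS₂⟩ := h₂
  refine ⟨ι₁ ∘L K₁ ∘L π₁ + ι₂ ∘L K₃ ∘L π₂, ι₁ ∘L K₂ ∘L π₁ + ι₂ ∘L K₄ ∘L π₂,
    (hK₁.comp_comp ι₁ π₁).add (hK₃.comp_comp ι₂ π₂),
    (hK₂.comp_comp ι₁ π₁).add (hK₄.comp_comp ι₂ π₂), ?_, ?_⟩
  · calc (ι₁ ∘L S₁ ∘L π₁ + ι₂ ∘L S₂ ∘L π₂) * Q
          = ι₁ ∘L (S₁ * Q₁) ∘L π₁ + ι₂ ∘L (S₂ * Q₂) ∘L π₂ := by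
          simp only [mul_def, add_comp, comp_assoc, hπ₁, hπ₂]
      _ = 1 - (ι₁ ∘L K₁ ∘L π₁ + ι₂ ∘L K₃ ∘L π₂) := by
          rw [hSQ₁, hSQ₂, ← hsum]
          simp only [sub_comp, comp_sub, one_def, id_comp]
          abel
  · calc Q * (ι₁ ∘L S₁ ∘L π₁ + ι₂ ∘L S₂ ∘L π₂)
          = ι₁ ∘L (Q₁ * S₁) ∘L π₁ + ι₂ ∘L (Q₂ * S₂) ∘L π₂ := by
          simp only [mul_def, comp_add, ← comp_assoc, hι₁, hι₂]
      _ = 1 - (ι₁ ∘L K₂ ∘L π₁ + ι₂ ∘L K₄ ∘L π₂) := by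
          rw [hQS₁, hQS₂, ← hsum]
          simp only [sub_comp, comp_sub, one_def, id_comp]
          abel

variable [SMulCommClass ℍᵐᵒᵖ ℝ E] [SMulCommClass ℍᵐᵒᵖ ℝ F]

theorem comp_Qs_of_comp_eq {T : E →L[ℍᵐᵒᵖ] E} {T' : F →L[ℍᵐᵒᵖ] F} {A : E →L[ℍᵐᵒᵖ] F}
    (hA : A ∘L T = T' ∘L A) (q : ℍ) : A ∘L Qs T q = Qs T' q ∘L A := by
  ext x
  have hx : ∀ y, A (T y) = T' (A y) := fun y => congr($hA y)
  simp [Qs, hx]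

end QuasiInverse

section Idempotent

variable {R M : Type*} [Semiring R] [TopologicalSpace M] [AddCommMonoid M] [Module R M]

theorem mapsTo_range_of_commute {T P : M →L[R] M} (h : Commute T P) :
    ∀ x ∈ LinearMap.range (P : M →ₗ[R] M), T x ∈ LinearMap.range (P : M →ₗ[R] M) := by
  rintro _ ⟨y, rfl⟩
  exact ⟨T y, congr($h.symm y)⟩

theorem rangeRestrict_comp_subtypeL {P : M →L[R] M} (hP : IsIdempotentElem P) :
    P.rangeRestrict ∘L (LinearMap.range (P : M →ₗ[R] M)).subtypeL = 1 := by
  ext ⟨_, y, rfl⟩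
  exact congr($hP y)

end Idempotent

section Restriction

variable {V : Type*} [NormedAddCommGroup V] [Module ℍᵐᵒᵖ V]

theorem subtypeL_comp_restrictOp (T : V →L[ℍᵐᵒᵖ] V) (M : Submodule ℍᵐᵒᵖ V)
    (h : ∀ x ∈ M, T x ∈ M) : M.subtypeL ∘L restrictOp T M h = T ∘L M.subtypeL :=
  rfl

theorem rangeRestrict_comp_of_commute {T P : V →L[ℍᵐᵒᵖ] V} (h : Commute T P) :
    P.rangeRestrict ∘L T = restrictOp T _ (mapsTo_range_of_commute h) ∘L P.rangeRestrict := by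
  ext x
  exact congr($h.symm x)

variable [NormedSpace ℝ V] [IsScalarTower ℝ ℍᵐᵒᵖ V] [SMulCommClass ℍᵐᵒᵖ ℝ V]

theorem exists_isQuasiInverse_Qs_restrictOp_range {T P : V →L[ℍᵐᵒᵖ] V} (hP : IsIdempotentElem P)
    (hTP : Commute T P) (q : ℍ) (hS : ∃ S, IsQuasiInverse S (Qs T q)) :
    ∃ S, IsQuasiInverse S (Qs (restrictOp T _ (mapsTo_range_of_commute hTP)) q) :=
  let ⟨_, hS⟩ := hS
  ⟨_, hS.compress (rangeRestrict_comp_subtypeL hP)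
    (comp_Qs_of_comp_eq (subtypeL_comp_restrictOp _ _ _) q)
    (comp_Qs_of_comp_eq (rangeRestrict_comp_of_commute hTP) q)⟩

theorem exists_isQuasiInverse_Qs_of_restrictOp_range {T P : V →L[ℍᵐᵒᵖ] V}
    (hTP : Commute T P) (q : ℍ)
    (hS₁ : ∃ S, IsQuasiInverse S (Qs (restrictOp T _ (mapsTo_range_of_commute hTP)) q))
    (hS₂ : ∃ S, IsQuasiInverse S
      (Qs (restrictOp T _ (mapsTo_range_of_commute ((Commute.one_right T).sub_right hTP))) q)) :
    ∃ S, IsQuasiInverse S (Qs T q) := by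
  obtain ⟨S₁, hS₁⟩ := hS₁
  obtain ⟨S₂, hS₂⟩ := hS₂
  have hTP' : Commute T (1 - P) := (Commute.one_right T).sub_right hTP
  exact ⟨_, hS₁.of_decomposition hS₂
    (comp_Qs_of_comp_eq (subtypeL_comp_restrictOp _ _ _) q)
    (comp_Qs_of_comp_eq (rangeRestrict_comp_of_commute hTP) q)
    (comp_Qs_of_comp_eq (subtypeL_comp_restrictOp _ _ _) q)
    (comp_Qs_of_comp_eq (rangeRestrict_comp_of_commute hTP') q) (add_sub_cancel P 1)⟩

end Restriction

theorem stmt2_general {V : Type*} [NormedAddCommGroup V] [NormedSpace ℝ V]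
    [Module ℍᵐᵒᵖ V] [IsScalarTower ℝ ℍᵐᵒᵖ V] [SMulCommClass ℍᵐᵒᵖ ℝ V]
    (T P₁ : V →L[ℍᵐᵒᵖ] V) (hproj : P₁ * P₁ = P₁) (hcomm : T * P₁ = P₁ * T) :
    ∃ (h₁ : ∀ x ∈ LinearMap.range (P₁ : V →ₗ[ℍᵐᵒᵖ] V), T x ∈ LinearMap.range (P₁ : V →ₗ[ℍᵐᵒᵖ] V))
      (h₂ : ∀ x ∈ LinearMap.range ((1 - P₁ : V →L[ℍᵐᵒᵖ] V) : V →ₗ[ℍᵐᵒᵖ] V), T x ∈ LinearMap.range ((1 - P₁ : V →L[ℍᵐᵒᵖ] V) : V →ₗ[ℍᵐᵒᵖ] V)),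
      IsClosed ((LinearMap.range (P₁ : V →ₗ[ℍᵐᵒᵖ] V) : Submodule ℍᵐᵒᵖ V) : Set V) ∧
      IsClosed ((LinearMap.range ((1 - P₁ : V →L[ℍᵐᵒᵖ] V) : V →ₗ[ℍᵐᵒᵖ] V) : Submodule ℍᵐᵒᵖ V) : Set V) ∧
      essSpectrum T =
        essSpectrum (restrictOp T (LinearMap.range (P₁ : V →ₗ[ℍᵐᵒᵖ] V)) h₁) ∪
          essSpectrum (restrictOp T (LinearMap.range ((1 - P₁ : V →L[ℍᵐᵒᵖ] V) : V →ₗ[ℍᵐᵒᵖ] V)) h₂) := by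
  have hP₂ : IsIdempotentElem (1 - P₁) := IsIdempotentElem.one_sub hproj
  have hTP₂ : Commute T (1 - P₁) := (Commute.one_right T).sub_right hcomm
  refine ⟨mapsTo_range_of_commute hcomm, mapsTo_range_of_commute hTP₂,
    IsIdempotentElem.isClosed_range hproj, hP₂.isClosed_range, ?_⟩
  ext q
  simp only [essSpectrum, Set.mem_ofPred_eq, Set.mem_union, ← not_and_or, not_iff_not]
  exact ⟨fun hS => ⟨exists_isQuasiInverse_Qs_restrictOp_range hproj hcomm q hS,
      exists_isQuasiInverse_Qs_restrictOp_range hP₂ hTP₂ q hS⟩,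
    fun ⟨hS₁, hS₂⟩ => exists_isQuasiInverse_Qs_of_restrictOp_range hcomm q hS₁ hS₂⟩

theorem stmt2 {V : Type*} [NormedAddCommGroup V] [NormedSpace ℝ V] [CompleteSpace V]
    [Module ℍᵐᵒᵖ V] [IsScalarTower ℝ ℍᵐᵒᵖ V] [SMulCommClass ℍᵐᵒᵖ ℝ V]
    (hnorm : ∀ (x : V) (q : ℍ), ‖op q • x‖ = ‖x‖ * ‖q‖)
    (T P₁ : V →L[ℍᵐᵒᵖ] V) (hproj : P₁ * P₁ = P₁) (hcomm : T * P₁ = P₁ * T) :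
    ∃ (h₁ : ∀ x ∈ LinearMap.range (P₁ : V →ₗ[ℍᵐᵒᵖ] V), T x ∈ LinearMap.range (P₁ : V →ₗ[ℍᵐᵒᵖ] V))
      (h₂ : ∀ x ∈ LinearMap.range ((1 - P₁ : V →L[ℍᵐᵒᵖ] V) : V →ₗ[ℍᵐᵒᵖ] V), T x ∈ LinearMap.range ((1 - P₁ : V →L[ℍᵐᵒᵖ] V) : V →ₗ[ℍᵐᵒᵖ] V)),
      IsClosed ((LinearMap.range (P₁ : V →ₗ[ℍᵐᵒᵖ] V) : Submodule ℍᵐᵒᵖ V) : Set V) ∧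
      IsClosed ((LinearMap.range ((1 - P₁ : V →L[ℍᵐᵒᵖ] V) : V →ₗ[ℍᵐᵒᵖ] V) : Submodule ℍᵐᵒᵖ V) : Set V) ∧
      essSpectrum T =
        essSpectrum (restrictOp T (LinearMap.range (P₁ : V →ₗ[ℍᵐᵒᵖ] V)) h₁) ∪
          essSpectrum (restrictOp T (LinearMap.range ((1 - P₁ : V →L[ℍᵐᵒᵖ] V) : V →ₗ[ℍᵐᵒᵖ] V)) h₂) :=
  stmt2_general T P₁ hproj hcomm
end

section
/- Let V be a right Banach ℍ-module, T ∈ B(V), and let P, P' ∈ B(V) be projections (P² = P, P'² = P') commuting with T. Assume that dist(σ_S(T|_{R(P)}), σ_S(T|_{N(P)})) > 0, that σ_S(T|_{R(P')}) = σ_S(T|_{R(P)}), and that σ_S(T|_{N(P')}) = σ_S(T|_{N(P)}). Then R(P') = R(P) and N(P') = N(P); consequently P' = P. -/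
/-!
Quaternionic setting: `ℍ` is the real quaternions.  A right Banach `ℍ`-module is
formalized as a real Banach space `V` together with a compatible `Module ℍᵐᵒᵖ V`
structure (right `ℍ`-action) satisfying `‖x • q‖ = ‖x‖ * |q|`; bounded right
`ℍ`-linear operators are the continuous `ℍᵐᵒᵖ`-linear maps `V →L[ℍᵐᵒᵖ] V`.
-/

open MulOpposite

/-!
Rosenblum's theorem: if `B S = S A` and `σ(A) ∩ σ(B) = ∅` on complex Banach spaces, then `S = 0`,
because `S` is annihilated by `X ↦ B X - X A`, a difference of two commuting operators with
disjoint spectra, which is invertible by Gelfand theory. A right Banach `ℍ`-module is a complex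
Banach space through `ℂ ⊆ ℍ`, and for complex `z` one has `Q_z(T) = (T - z̄)(T - z)`, so every
complex spectral value of `T` lies in `σ_S(T)`; hence Rosenblum's theorem holds for S-spectra.
Now `1 - P` maps `R(P')` into `N(P)` and intertwines the restrictions of `T`, whose S-spectra
`σ_S(T|R(P')) = σ_S(T|R(P))` and `σ_S(T|N(P))` are disjoint, so `R(P') ⊆ R(P)`. The other three
inclusions are obtained in the same way, and an idempotent is determined by its range and kernel.
-/

open ContinuousLinearMap

theorem Subalgebra.isUnit_of_isUnit_coe_centralizer {R A : Type*} [CommSemiring R] [Semiring A]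
    [Algebra R A] {s : Set A} {x : centralizer R s} (hx : IsUnit (x : A)) : IsUnit x := by
  obtain ⟨u, hu⟩ := hx
  have hinv : ((u⁻¹ : Aˣ) : A) ∈ centralizer R s := fun y hy =>
    (Commute.units_inv_right (hu ▸ x.2 y hy :)).eq
  exact ⟨⟨x, ⟨_, hinv⟩, Subtype.ext (by simp [← hu]), Subtype.ext (by simp [← hu])⟩, rfl⟩

theorem Subalgebra.spectrum_centralizer_subset {R A : Type*} [CommRing R] [Ring A]
    [Algebra R A] {s : Set A} (x : centralizer R s) :
    spectrum R x ⊆ spectrum R (x : A) := fun _ hz hunit =>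
  hz (isUnit_of_isUnit_coe_centralizer (x := _ - x) hunit)

theorem spectrum_op {R A : Type*} [CommSemiring R] [Ring A] [Algebra R A] (a : A) :
    spectrum R (op a) = spectrum R a := by
  ext z
  simp [spectrum.mem_iff, MulOpposite.algebraMap_apply, ← op_sub]

theorem Commute.isUnit_sub_of_disjoint_spectrum {𝔸 : Type*} [NormedRing 𝔸] [NormedAlgebra ℂ 𝔸]
    [CompleteSpace 𝔸] {a b : 𝔸} (hab : Commute a b)
    (hσ : Disjoint (spectrum ℂ a) (spectrum ℂ b)) : IsUnit (a - b) := by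
  by_contra h
  -- The bicommutant of `{a, b}` is a commutative Banach algebra in which spectra are the same as
  -- in `𝔸`; a character vanishing on `a - b` then takes a common spectral value at `a` and `b`.
  set C := Subalgebra.centralizer ℂ (Set.centralizer {a, b})
  have hpair : ∀ x ∈ ({a, b} : Set 𝔸), ∀ y ∈ ({a, b} : Set 𝔸), x * y = y * x := by
    simp only [Set.mem_insert_iff, Set.mem_singleton_iff]
    rintro _ (rfl | rfl) _ (rfl | rfl) <;> first | rfl | exact hab.eq | exact hab.eq.symm
  have hmem : ∀ x ∈ ({a, b} : Set 𝔸), x ∈ C := fun x hx => Set.subset_centralizer_centralizer hx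
  let _ : CompleteSpace C := (Set.isClosed_centralizer _).completeSpace_coe
  let _ : NormedCommRing C :=
    { (inferInstance : NormedRing C) with
      mul_comm := fun x y => Subtype.ext <|
        Set.centralizer_centralizer_comm_of_comm hpair _ x.2 _ y.2 }
  let a' : C := ⟨a, hmem a (by simp)⟩
  let b' : C := ⟨b, hmem b (by simp)⟩
  obtain ⟨φ, hφ⟩ := WeakDual.CharacterSpace.exists_apply_eq_zero
    (a := a' - b') fun hu => h (by simpa using hu.map C.val)
  rw [map_sub, sub_eq_zero] at hφ
  exact Set.disjoint_left.1 hσ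
    (Subalgebra.spectrum_centralizer_subset a' (WeakDual.CharacterSpace.apply_mem_spectrum φ a'))
    (Subalgebra.spectrum_centralizer_subset b'
      (hφ ▸ WeakDual.CharacterSpace.apply_mem_spectrum φ b'))

namespace ContinuousLinearMap

section CompAlgHom

variable (𝕜 : Type*) {X Y : Type*} [NontriviallyNormedField 𝕜] [NormedAddCommGroup X]
  [NormedSpace 𝕜 X] [NormedAddCommGroup Y] [NormedSpace 𝕜 Y]

variable (X) in
noncomputable def postcompAlgHom : (Y →L[𝕜] Y) →ₐ[𝕜] (X →L[𝕜] Y) →L[𝕜] X →L[𝕜] Y :=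
  AlgHom.ofLinearMap (compL 𝕜 X Y Y).toLinearMap (by ext; rfl) (fun _ _ => by ext; rfl)

variable (Y) in
noncomputable def precompAlgHom : (X →L[𝕜] X)ᵐᵒᵖ →ₐ[𝕜] (X →L[𝕜] Y) →L[𝕜] X →L[𝕜] Y :=
  AlgHom.ofLinearMap
    ((compL 𝕜 X X Y).flip.toLinearMap ∘ₗ (opLinearEquiv 𝕜).symm.toLinearMap)
    (by ext; rfl) (fun _ _ => by ext; rfl)

end CompAlgHom

variable {X Y : Type*} [NormedAddCommGroup X] [NormedSpace ℂ X]
  [NormedAddCommGroup Y] [NormedSpace ℂ Y] [CompleteSpace Y]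

theorem eq_zero_of_comp_eq_comp_of_disjoint_spectrum
    {A : X →L[ℂ] X} {B : Y →L[ℂ] Y} {S : X →L[ℂ] Y} (hS : B ∘L S = S ∘L A)
    (hAB : Disjoint (spectrum ℂ A) (spectrum ℂ B)) : S = 0 := by
  have hLR : Commute (postcompAlgHom ℂ X B) (precompAlgHom ℂ Y (op A)) := by ext; rfl
  have hσ : Disjoint (spectrum ℂ (postcompAlgHom ℂ X B))
      (spectrum ℂ (precompAlgHom ℂ Y (op A))) := by
    refine hAB.symm.mono (AlgHom.spectrum_apply_subset _ _) ?_
    simpa only [spectrum_op] using AlgHom.spectrum_apply_subset (precompAlgHom ℂ Y) (op A)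
  -- Naming `𝔸` avoids a very slow unification of the algebra structures on this space.
  have hunit := Commute.isUnit_sub_of_disjoint_spectrum
    (𝔸 := (X →L[ℂ] Y) →L[ℂ] X →L[ℂ] Y) hLR hσ
  have hS0 : (postcompAlgHom ℂ X B - precompAlgHom ℂ Y (op A)) S = 0 := sub_eq_zero.2 hS
  exact (isUnit_iff_bijective.1 hunit).injective (hS0.trans (map_zero _).symm)

end ContinuousLinearMap

theorem Quaternion.norm_coeComplex (z : ℂ) : ‖(z : ℍ)‖ = ‖z‖ := by
  rw [← sq_eq_sq₀ (norm_nonneg _) (norm_nonneg _), sq, ← Quaternion.normSq_eq_norm_mul_self,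
    ← Complex.normSq_eq_norm_sq, Quaternion.normSq_def', Complex.normSq_apply]
  simp [sq]

noncomputable def Quaternion.ofComplexOp : ℂ →+* ℍᵐᵒᵖ :=
  RingHom.toOpposite Quaternion.ofComplex.toRingHom fun x y =>
    (Commute.all x y).map Quaternion.ofComplex

noncomputable abbrev NormedSpace.complexOfRightQuaternionic (W : Type*) [NormedAddCommGroup W]
    [Module ℍᵐᵒᵖ W] (hW : ∀ (x : W) (q : ℍ), ‖op q • x‖ = ‖x‖ * ‖q‖) : NormedSpace ℂ W :=
  { Module.compHom W Quaternion.ofComplexOp with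
    norm_smul_le z x := by
      change ‖op (z : ℍ) • x‖ ≤ ‖z‖ * ‖x‖
      rw [hW, Quaternion.norm_coeComplex, mul_comm] }

namespace ContinuousLinearMap

variable {X Y : Type*} [NormedAddCommGroup X] [Module ℍᵐᵒᵖ X] [Module ℂ X]
  [NormedAddCommGroup Y] [Module ℍᵐᵒᵖ Y] [Module ℂ Y]

noncomputable def toComplex (hX : ∀ (z : ℂ) (x : X), z • x = op (z : ℍ) • x)
    (hY : ∀ (z : ℂ) (y : Y), z • y = op (z : ℍ) • y) (f : X →L[ℍᵐᵒᵖ] Y) : X →L[ℂ] Y where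
  toFun := f
  map_add' := map_add f
  map_smul' z x := by rw [hX, hY, map_smul, RingHom.id_apply]
  cont := f.cont

@[simp]
theorem toComplex_apply (hX : ∀ (z : ℂ) (x : X), z • x = op (z : ℍ) • x)
    (hY : ∀ (z : ℂ) (y : Y), z • y = op (z : ℍ) • y) (f : X →L[ℍᵐᵒᵖ] Y) (x : X) :
    f.toComplex hX hY x = f x := rfl

end ContinuousLinearMap

theorem op_coe_real_smul {W : Type*} [AddCommGroup W] [Module ℝ W] [Module ℍᵐᵒᵖ W]
    [IsScalarTower ℝ ℍᵐᵒᵖ W] (r : ℝ) (x : W) : op (r : ℍ) • x = r • x := by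
  rw [← smul_one_smul ℍᵐᵒᵖ r x, ← op_one, ← op_smul, ← Algebra.algebraMap_eq_smul_one]
  rfl

theorem coeComplex_mem_sSpectrum {W : Type*} [NormedAddCommGroup W] [Module ℍᵐᵒᵖ W]
    [Module ℝ W] [IsScalarTower ℝ ℍᵐᵒᵖ W] [SMulCommClass ℍᵐᵒᵖ ℝ W] [ContinuousConstSMul ℝ W]
    [Module ℂ W] [ContinuousConstSMul ℂ W]
    (hW : ∀ (z : ℂ) (x : W), z • x = op (z : ℍ) • x) (T : W →L[ℍᵐᵒᵖ] W) {z : ℂ}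
    (hz : z ∈ spectrum ℂ (T.toComplex hW hW)) : (z : ℍ) ∈ sSpectrum T := by
  intro hQ
  set T' := T.toComplex hW hW
  have hreal : ∀ (r : ℝ) (x : W), (r : ℂ) • x = r • x := fun r x => by
    rw [hW, Quaternion.coeComplex_coe, op_coe_real_smul]
  have hfactor : (Qs T z).toComplex hW hW =
      (T' - algebraMap ℂ _ (starRingEnd ℂ z)) * (T' - algebraMap ℂ _ z) := by
    ext x
    have hTz : T (z • x) = z • T x := T'.map_smul z x
    have hre : (2 * z.re) • T x = z • T x + starRingEnd ℂ z • T x := by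
      rw [← add_smul, Complex.add_conj, hreal]
    simp only [Qs, Quaternion.re_coeComplex, toComplex_apply, add_apply, sub_apply,
      mul_apply_eq_comp, smul_apply, one_apply_eq_self, ContinuousLinearMap.algebraMap_apply, map_sub, T']
    rw [smul_smul, ← Complex.normSq_eq_conj_mul_self, hreal,
      Quaternion.norm_coeComplex, Complex.sq_norm, hre, hTz]
    abel
  have hcomm : Commute (T' - algebraMap ℂ _ (starRingEnd ℂ z)) (T' - algebraMap ℂ _ z) :=
    ((Commute.refl T').sub_right (Algebra.commute_algebraMap_right z T')).sub_left
      ((Algebra.commute_algebraMap_left _ T').sub_right (Algebra.commute_algebraMap_left _ _))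
  have hQ' : IsUnit ((Qs T z).toComplex hW hW) :=
    hQ.map (⟨⟨toComplex hW hW, rfl⟩, fun _ _ => rfl⟩ : (W →L[ℍᵐᵒᵖ] W) →* (W →L[ℂ] W))
  rw [hfactor, hcomm.isUnit_mul_iff] at hQ'
  exact spectrum.mem_iff.1 hz (by simpa using hQ'.2.neg)

theorem eq_zero_of_comp_eq_comp_of_disjoint_sSpectrum {X Y : Type*}
    [NormedAddCommGroup X] [NormedSpace ℝ X] [Module ℍᵐᵒᵖ X]
    [IsScalarTower ℝ ℍᵐᵒᵖ X] [SMulCommClass ℍᵐᵒᵖ ℝ X]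
    [NormedAddCommGroup Y] [NormedSpace ℝ Y] [CompleteSpace Y] [Module ℍᵐᵒᵖ Y]
    [IsScalarTower ℝ ℍᵐᵒᵖ Y] [SMulCommClass ℍᵐᵒᵖ ℝ Y]
    (hX : ∀ (x : X) (q : ℍ), ‖op q • x‖ = ‖x‖ * ‖q‖)
    (hY : ∀ (y : Y) (q : ℍ), ‖op q • y‖ = ‖y‖ * ‖q‖)
    {A : X →L[ℍᵐᵒᵖ] X} {B : Y →L[ℍᵐᵒᵖ] Y} {S : X →L[ℍᵐᵒᵖ] Y} (hS : B ∘L S = S ∘L A)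
    (hAB : Disjoint (sSpectrum A) (sSpectrum B)) : S = 0 := by
  let _ := NormedSpace.complexOfRightQuaternionic X hX
  let _ := NormedSpace.complexOfRightQuaternionic Y hY
  have hXℂ : ∀ (z : ℂ) (x : X), z • x = op (z : ℍ) • x := fun _ _ => rfl
  have hYℂ : ∀ (z : ℂ) (y : Y), z • y = op (z : ℍ) • y := fun _ _ => rfl
  have hσ : Disjoint (spectrum ℂ (A.toComplex hXℂ hXℂ)) (spectrum ℂ (B.toComplex hYℂ hYℂ)) :=
    Set.disjoint_left.2 fun z hzA hzB => Set.disjoint_left.1 hAB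
      (coeComplex_mem_sSpectrum hXℂ A hzA) (coeComplex_mem_sSpectrum hYℂ B hzB)
  have hS0 := eq_zero_of_comp_eq_comp_of_disjoint_spectrum
    (S := S.toComplex hXℂ hYℂ) (by ext x; exact congr($hS x)) hσ
  ext x
  exact congr($hS0 x)

section Projections

variable {V : Type*} [NormedAddCommGroup V] [NormedSpace ℝ V] [CompleteSpace V]
  [Module ℍᵐᵒᵖ V] [IsScalarTower ℝ ℍᵐᵒᵖ V] [SMulCommClass ℍᵐᵒᵖ ℝ V]
  (hV : ∀ (x : V) (q : ℍ), ‖op q • x‖ = ‖x‖ * ‖q‖) {T : V →L[ℍᵐᵒᵖ] V}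
include hV

theorem eq_zero_of_mapsTo_of_disjoint_sSpectrum_restrictOp {G : V →L[ℍᵐᵒᵖ] V}
    {M N : Submodule ℍᵐᵒᵖ V} (hN : IsClosed (N : Set V)) (hTM : ∀ x ∈ M, T x ∈ M)
    (hTN : ∀ x ∈ N, T x ∈ N) (hGMN : ∀ x ∈ M, G x ∈ N) (hGT : Commute G T)
    (hMN : Disjoint (sSpectrum (restrictOp T M hTM)) (sSpectrum (restrictOp T N hTN))) :
    ∀ x ∈ M, G x = 0 := by
  have _ : CompleteSpace N := hN.completeSpace_coe
  have hG := eq_zero_of_comp_eq_comp_of_disjoint_sSpectrum (fun (x : M) q => hV x q)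
    (fun (y : N) q => hV y q) (A := restrictOp T M hTM) (B := restrictOp T N hTN)
    (S := (G ∘L M.subtypeL).codRestrict N fun x => hGMN x x.2)
    (by ext x; exact congr($hGT.eq x).symm) hMN
  exact fun x hx => congr(($hG ⟨x, hx⟩ : V))

theorem le_range_of_disjoint_sSpectrum_ker {P : V →L[ℍᵐᵒᵖ] V} (hP : IsIdempotentElem P)
    (hTP : Commute T P) {M : Submodule ℍᵐᵒᵖ V} (hTM : ∀ x ∈ M, T x ∈ M)
    (hTK : ∀ x ∈ LinearMap.ker (P : V →ₗ[ℍᵐᵒᵖ] V), T x ∈ LinearMap.ker (P : V →ₗ[ℍᵐᵒᵖ] V))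
    (hσ : Disjoint (sSpectrum (restrictOp T M hTM))
      (sSpectrum (restrictOp T (LinearMap.ker (P : V →ₗ[ℍᵐᵒᵖ] V)) hTK))) :
    M ≤ LinearMap.range (P : V →ₗ[ℍᵐᵒᵖ] V) := by
  intro x hx
  have h := eq_zero_of_mapsTo_of_disjoint_sSpectrum_restrictOp hV (G := 1 - P)
    P.isClosed_ker hTM hTK (fun y _ => by simp [← mul_apply_eq_comp, hP.eq])
    ((Commute.one_left T).sub_left hTP.symm) hσ x hx
  rw [sub_apply, sub_eq_zero] at h
  exact ⟨x, h.symm⟩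

theorem le_ker_of_disjoint_sSpectrum_range {P : V →L[ℍᵐᵒᵖ] V} (hP : IsIdempotentElem P)
    (hTP : Commute T P) {M : Submodule ℍᵐᵒᵖ V} (hTM : ∀ x ∈ M, T x ∈ M)
    (hTR : ∀ x ∈ LinearMap.range (P : V →ₗ[ℍᵐᵒᵖ] V), T x ∈ LinearMap.range (P : V →ₗ[ℍᵐᵒᵖ] V))
    (hσ : Disjoint (sSpectrum (restrictOp T M hTM))
      (sSpectrum (restrictOp T (LinearMap.range (P : V →ₗ[ℍᵐᵒᵖ] V)) hTR))) :
    M ≤ LinearMap.ker (P : V →ₗ[ℍᵐᵒᵖ] V) := fun x hx =>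
  eq_zero_of_mapsTo_of_disjoint_sSpectrum_restrictOp hV hP.isClosed_range hTM hTR
    (fun y _ => LinearMap.mem_range_self _ y) hTP.symm hσ x hx

end Projections

theorem stmt3 {V : Type*} [NormedAddCommGroup V] [NormedSpace ℝ V] [CompleteSpace V]
    [Module ℍᵐᵒᵖ V] [IsScalarTower ℝ ℍᵐᵒᵖ V] [SMulCommClass ℍᵐᵒᵖ ℝ V]
    (hnorm : ∀ (x : V) (q : ℍ), ‖op q • x‖ = ‖x‖ * ‖q‖)
    (T P P' : V →L[ℍᵐᵒᵖ] V)
    (hP : P * P = P) (hP' : P' * P' = P')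
    (hTP : T * P = P * T) (hTP' : T * P' = P' * T)
    (h₁ : ∀ x ∈ LinearMap.range (P : V →ₗ[ℍᵐᵒᵖ] V), T x ∈ LinearMap.range (P : V →ₗ[ℍᵐᵒᵖ] V))
    (h₂ : ∀ x ∈ LinearMap.ker (P : V →ₗ[ℍᵐᵒᵖ] V), T x ∈ LinearMap.ker (P : V →ₗ[ℍᵐᵒᵖ] V))
    (h₁' : ∀ x ∈ LinearMap.range (P' : V →ₗ[ℍᵐᵒᵖ] V), T x ∈ LinearMap.range (P' : V →ₗ[ℍᵐᵒᵖ] V))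
    (h₂' : ∀ x ∈ LinearMap.ker (P' : V →ₗ[ℍᵐᵒᵖ] V), T x ∈ LinearMap.ker (P' : V →ₗ[ℍᵐᵒᵖ] V))
    (hdist : ∃ ε > (0 : ℝ), ∀ a ∈ sSpectrum (restrictOp T (LinearMap.range (P : V →ₗ[ℍᵐᵒᵖ] V)) h₁),
      ∀ b ∈ sSpectrum (restrictOp T (LinearMap.ker (P : V →ₗ[ℍᵐᵒᵖ] V)) h₂), ε ≤ dist a b)
    (hσ₁ : sSpectrum (restrictOp T (LinearMap.range (P' : V →ₗ[ℍᵐᵒᵖ] V)) h₁') =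
      sSpectrum (restrictOp T (LinearMap.range (P : V →ₗ[ℍᵐᵒᵖ] V)) h₁))
    (hσ₂ : sSpectrum (restrictOp T (LinearMap.ker (P' : V →ₗ[ℍᵐᵒᵖ] V)) h₂') =
      sSpectrum (restrictOp T (LinearMap.ker (P : V →ₗ[ℍᵐᵒᵖ] V)) h₂)) :
    LinearMap.range (P' : V →ₗ[ℍᵐᵒᵖ] V) = LinearMap.range (P : V →ₗ[ℍᵐᵒᵖ] V) ∧ LinearMap.ker (P' : V →ₗ[ℍᵐᵒᵖ] V) = LinearMap.ker (P : V →ₗ[ℍᵐᵒᵖ] V) ∧ P' = P := by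
  obtain ⟨ε, hε, hsep⟩ := hdist
  have hRK : Disjoint (sSpectrum (restrictOp T _ h₁)) (sSpectrum (restrictOp T _ h₂)) :=
    Set.disjoint_left.2 fun q hR hK => by simpa [hε.not_ge] using hsep q hR q hK
  have hrange := le_antisymm
    (le_range_of_disjoint_sSpectrum_ker hnorm hP hTP h₁' h₂ (hσ₁ ▸ hRK))
    (le_range_of_disjoint_sSpectrum_ker hnorm hP' hTP' h₁ h₂' (hσ₂ ▸ hRK))
  have hker := le_antisymm
    (le_ker_of_disjoint_sSpectrum_range hnorm hP hTP h₂' h₁ (hσ₂ ▸ hRK.symm))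
    (le_ker_of_disjoint_sSpectrum_range hnorm hP' hTP' h₂ h₁' (hσ₁ ▸ hRK.symm))
  exact ⟨hrange, hker, ContinuousLinearMap.IsIdempotentElem.ext hP' hP ⟨hrange, hker⟩⟩
end

section
/- Let V be a right Banach ℍ-module and T ∈ B(V). If q ∈ σ_S(T) is a right eigenvalue of finite type of T, then q ∉ σ_W^S(T), where σ_W^S(T) is the Weyl S-spectrum of T. -/
/-!
Quaternionic setting: `ℍ` is the real quaternions.  A right Banach `ℍ`-module is
formalized as a real Banach space `V` together with a compatible `Module ℍᵐᵒᵖ V`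
structure (right `ℍ`-action) satisfying `‖x • q‖ = ‖x‖ * |q|`; bounded right
`ℍ`-linear operators are the continuous `ℍᵐᵒᵖ`-linear maps `V →L[ℍᵐᵒᵖ] V`.
-/

open MulOpposite

/-!
Write `V = M₁ ⊕ M₂` and let `P` be the projection onto `M₁` along `M₂`; it is bounded because
both summands are closed (open mapping theorem over `ℝ`). For the real number `c = Re q + 1`
the operator `K = (c - T) P` has finite rank, hence is compact, and `T + K` acts as `c` on `M₁`
and as `T` on `M₂`. Thus `Q_q(T + K)` is the nonzero scalar `(c - Re q)² + |Im q|²` on `M₁`,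
and it is invertible on `M₂` because `q ∈ [q] = σ_S(T|M₁)` lies outside `σ_S(T|M₂)`.
So `q ∉ σ_S(T + K)`.
-/

open Submodule

/-- A variant of `Submodule.IsCompl.isTopCompl_of_isClosed` for submodules over a ring `R` that
need not be a field, such as `ℍᵐᵒᵖ`: the open mapping theorem is applied over `𝕜`. -/
theorem Submodule.IsCompl.isTopCompl_of_isClosed_of_isScalarTower {𝕜 R E : Type*}
    [NontriviallyNormedField 𝕜] [Ring R] [NormedAddCommGroup E] [NormedSpace 𝕜 E]
    [CompleteSpace E] [Module R E] [Module 𝕜 R] [IsScalarTower 𝕜 R E]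
    {p q : Submodule R E} (h : IsCompl p q) (hp : IsClosed (p : Set E))
    (hq : IsClosed (q : Set E)) : IsTopCompl p q := by
  have h𝕜 : IsCompl (p.restrictScalars 𝕜) (q.restrictScalars 𝕜) :=
    (isCompl_restrictScalars_iff 𝕜).2 h
  refine h.isTopCompl_iff.2 ((h𝕜.isTopCompl_of_isClosed hp hq).continuous_projection.congr
    fun x => ?_)
  have hx : x = p.projection q h x + (x - p.projection q h x) := by abel
  conv_lhs => rw [hx]
  rw [map_add, projection_apply_of_mem_left h𝕜 (Submodule.projection_apply_mem h x),
    (Submodule.projection_apply_eq_zero_iff h𝕜).2 (sub_projection_mem h x), add_zero]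

theorem Submodule.IsTopCompl.isUnit_of_isUnit_restrict {R E : Type*} [Ring R]
    [TopologicalSpace E] [AddCommGroup E] [Module R E] [IsTopologicalAddGroup E]
    {p q : Submodule R E} (h : IsTopCompl p q) {A : E →L[R] E}
    (hp : ∀ x ∈ p, A x ∈ p) (hq : ∀ x ∈ q, A x ∈ q)
    (hAp : IsUnit (A.restrict hp)) (hAq : IsUnit (A.restrict hq)) : IsUnit A := by
  obtain ⟨S, hAS, hSA⟩ := isUnit_iff_exists.1 hAp
  obtain ⟨S', hAS', hS'A⟩ := isUnit_iff_exists.1 hAq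
  set B := ContinuousLinearMap.ofIsTopCompl h (p.subtypeL ∘L S) (q.subtypeL ∘L S')
  have hBp (x : p) : B x = S x := ContinuousLinearMap.ofIsTopCompl_apply_left h _ _ x
  have hBq (x : q) : B x = S' x := ContinuousLinearMap.ofIsTopCompl_apply_right h _ _ x
  refine isUnit_iff_exists.2 ⟨B, ?_, ?_⟩ <;>
    refine LinearMap.ext_on_codisjoint h.isCompl.codisjoint ?_ ?_ <;>
    intro x hx
  · simpa [← hBp] using congr(($hAS ⟨x, hx⟩ : E))
  · simpa [← hBq] using congr(($hAS' ⟨x, hx⟩ : E))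
  · simpa [← hBp] using congr(($hSA ⟨x, hx⟩ : E))
  · simpa [← hBq] using congr(($hS'A ⟨x, hx⟩ : E))

lemma self_mem_qSphere (q : ℍ) : q ∈ qSphere q := ⟨1, one_ne_zero, by simp⟩

lemma Quaternion.sq_re_le_sq_norm (q : ℍ) : q.re ^ 2 ≤ ‖q‖ ^ 2 := by
  rw [sq ‖q‖, ← Quaternion.normSq_eq_norm_mul_self, Quaternion.normSq_def']
  nlinarith [sq_nonneg q.imI, sq_nonneg q.imJ, sq_nonneg q.imK]

section

variable {W : Type*} [NormedAddCommGroup W] [Module ℍᵐᵒᵖ W] [Module ℝ W]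
  [SMulCommClass ℍᵐᵒᵖ ℝ W] [ContinuousConstSMul ℝ W]

lemma Qs_apply (T : W →L[ℍᵐᵒᵖ] W) (q : ℍ) (x : W) :
    Qs T q x = T (T x) - (2 * q.re) • T x + ‖q‖ ^ 2 • x := by
  simp [Qs]

lemma isUnit_Qs_smul_one {c : ℝ} {q : ℍ} (hc : c ≠ q.re) :
    IsUnit (Qs (c • 1 : W →L[ℍᵐᵒᵖ] W) q) := by
  set r := c ^ 2 - 2 * q.re * c + ‖q‖ ^ 2
  have hr : r ≠ 0 := by
    have : 0 < (c - q.re) ^ 2 := by have := sub_ne_zero.2 hc; positivity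
    nlinarith [q.sq_re_le_sq_norm]
  have hQ : Qs (c • 1 : W →L[ℍᵐᵒᵖ] W) q = r • 1 := by
    ext x
    simp only [Qs_apply, smul_apply, one_apply_eq_self]
    module
  rw [hQ]
  exact isUnit_iff_exists.2 ⟨r⁻¹ • 1, by ext; simp [smul_smul, hr], by ext; simp [smul_smul, hr]⟩

end

section

variable {V : Type*} [NormedAddCommGroup V] [NormedSpace ℝ V]
  [Module ℍᵐᵒᵖ V] [IsScalarTower ℝ ℍᵐᵒᵖ V]

lemma isCompactOp_of_forall_mem {K : V →L[ℍᵐᵒᵖ] V} {M : Submodule ℍᵐᵒᵖ V}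
    [FiniteDimensional ℍᵐᵒᵖ M] (hK : ∀ x, K x ∈ M) : IsCompactOp K := by
  have : FiniteDimensional ℝ (M.restrictScalars ℝ) :=
    (Module.Finite.trans ℍᵐᵒᵖ M : Module.Finite ℝ M)
  set C := ‖K.restrictScalars ℝ‖
  refine ((isCompact_closedBall (0 : M.restrictScalars ℝ) C).image
    continuous_subtype_val).closure_of_subset ?_
  rintro _ ⟨x, hx, rfl⟩
  refine ⟨⟨K x, hK x⟩, ?_, rfl⟩
  have hx : ‖x‖ ≤ 1 := by simpa using hx
  simpa using (K.restrictScalars ℝ).le_opNorm_of_le hx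

variable [SMulCommClass ℍᵐᵒᵖ ℝ V]

lemma Qs_mem {T : V →L[ℍᵐᵒᵖ] V} {M : Submodule ℍᵐᵒᵖ V} (hT : ∀ x ∈ M, T x ∈ M) (q : ℍ) :
    ∀ x ∈ M, Qs T q x ∈ M := fun x hx => by
  rw [Qs_apply]
  exact M.add_mem (M.sub_mem (hT _ (hT x hx)) (M.smul_of_tower_mem _ (hT x hx)))
    (M.smul_of_tower_mem _ hx)

lemma restrict_Qs {T : V →L[ℍᵐᵒᵖ] V} {M : Submodule ℍᵐᵒᵖ V} (hT : ∀ x ∈ M, T x ∈ M)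
    (q : ℍ) : (Qs T q).restrict (Qs_mem hT q) = Qs (T.restrict hT) q := by
  ext x
  simp [Qs_apply]

lemma sSpectrum_subset_union_of_isTopCompl {M₁ M₂ : Submodule ℍᵐᵒᵖ V} (hM : IsTopCompl M₁ M₂)
    {T : V →L[ℍᵐᵒᵖ] V} (h₁ : ∀ x ∈ M₁, T x ∈ M₁) (h₂ : ∀ x ∈ M₂, T x ∈ M₂) :
    sSpectrum T ⊆ sSpectrum (T.restrict h₁) ∪ sSpectrum (T.restrict h₂) := by
  intro q hq
  by_contra hq'
  simp only [Set.mem_union, sSpectrum, Set.mem_ofPred_eq, not_or, not_not] at hq hq'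
  rw [← restrict_Qs, ← restrict_Qs] at hq'
  exact hq (hM.isUnit_of_isUnit_restrict _ _ hq'.1 hq'.2)

end

theorem stmt5_general {V : Type*} [NormedAddCommGroup V] [NormedSpace ℝ V] [CompleteSpace V]
    [Module ℍᵐᵒᵖ V] [IsScalarTower ℝ ℍᵐᵒᵖ V] [SMulCommClass ℍᵐᵒᵖ ℝ V]
    (T : V →L[ℍᵐᵒᵖ] V) (q : ℍ)
    (hft : IsFiniteTypeEigenvalue T q) :
    q ∉ weylSpectrum T := by
  obtain ⟨M₁, M₂, h₁, h₂, hM₁, hM₂, hcompl, hfd, hdisj, hsph⟩ := hft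
  have hM : IsTopCompl M₁ M₂ := hcompl.isTopCompl_of_isClosed_of_isScalarTower (𝕜 := ℝ) hM₁ hM₂
  set c : ℝ := q.re + 1
  set K : V →L[ℍᵐᵒᵖ] V := (c • 1 - T) ∘L M₁.projectionL M₂ hM
  have hK (x : V) : K x ∈ M₁ := by
    have hPx := projectionL_apply_mem hM x
    simpa [K] using M₁.sub_mem (M₁.smul_of_tower_mem c hPx) (h₁ _ hPx)
  have hTK₁ (x : M₁) : (T + K) x = c • (x : V) := by simp [K, projectionL_apply_left]
  have hTK₂ (x : M₂) : (T + K) x = T x := by simp [K, projectionL_apply_right]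
  have hM₁TK : ∀ x ∈ M₁, (T + K) x ∈ M₁ := fun x hx => hTK₁ ⟨x, hx⟩ ▸ M₁.smul_of_tower_mem c hx
  have hM₂TK : ∀ x ∈ M₂, (T + K) x ∈ M₂ := fun x hx => hTK₂ ⟨x, hx⟩ ▸ h₂ x hx
  intro hW
  rcases sSpectrum_subset_union_of_isTopCompl hM hM₁TK hM₂TK
    (Set.mem_iInter₂.1 hW K (isCompactOp_of_forall_mem hK)) with hq | hq
  · have : (T + K).restrict hM₁TK = c • 1 := by ext x; exact hTK₁ x
    rw [this] at hq
    exact hq (isUnit_Qs_smul_one (by simp [c]))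
  · have : (T + K).restrict hM₂TK = restrictOp T M₂ h₂ := by ext x; exact hTK₂ x
    rw [this] at hq
    exact hdisj.subset ⟨hsph ▸ self_mem_qSphere q, hq⟩

theorem stmt5 {V : Type*} [NormedAddCommGroup V] [NormedSpace ℝ V] [CompleteSpace V]
    [Module ℍᵐᵒᵖ V] [IsScalarTower ℝ ℍᵐᵒᵖ V] [SMulCommClass ℍᵐᵒᵖ ℝ V]
    (hnorm : ∀ (x : V) (q : ℍ), ‖op q • x‖ = ‖x‖ * ‖q‖)
    (T : V →L[ℍᵐᵒᵖ] V) (q : ℍ) (hq : q ∈ sSpectrum T)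
    (hft : IsFiniteTypeEigenvalue T q) :
    q ∉ weylSpectrum T :=
  stmt5_general T q hft
end

section
/- Let V be a right Banach ℍ-module and T, S ∈ B(V). If ‖T − S‖ < μ(T), then μ(S) > 0 and the closure of R(S) is not a proper subset of the closure of R(T). -/
/-!
Quaternionic setting: `ℍ` is the real quaternions.  A right Banach `ℍ`-module is
formalized as a real Banach space `V` together with a compatible `Module ℍᵐᵒᵖ V`
structure (right `ℍ`-action) satisfying `‖x • q‖ = ‖x‖ * |q|`; bounded right
`ℍ`-linear operators are the continuous `ℍᵐᵒᵖ`-linear maps `V →L[ℍᵐᵒᵖ] V`.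
-/

open MulOpposite

theorem stmt10 {V : Type*} [NormedAddCommGroup V] [NormedSpace ℝ V] [CompleteSpace V]
    [Module ℍᵐᵒᵖ V] [IsScalarTower ℝ ℍᵐᵒᵖ V] [SMulCommClass ℍᵐᵒᵖ ℝ V]
    (hnorm : ∀ (x : V) (q : ℍ), ‖op q • x‖ = ‖x‖ * ‖q‖)
    (T S : V →L[ℍᵐᵒᵖ] V) (h : opNorm (T - S) < muMin T) :
    0 < muMin S ∧ ¬ (closure (Set.range ⇑S) ⊂ closure (Set.range ⇑T)) := by
  classical
  set d := opNorm (T - S) with hd_def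
  set m := muMin T with hm_def
  -- ℝ-linear restrictions
  let T' : V →L[ℝ] V := T.restrictScalars ℝ
  let S' : V →L[ℝ] V := S.restrictScalars ℝ
  let D' : V →L[ℝ] V := (T - S).restrictScalars ℝ
  have hT'app : ∀ x : V, T' x = T x := fun _ => rfl
  have hS'app : ∀ x : V, S' x = S x := fun _ => rfl
  have hD'app : ∀ x : V, D' x = (T - S) x := fun _ => rfl
  -- opNorm facts
  have hmemD : ‖D'‖ ∈ {c : ℝ | 0 ≤ c ∧ ∀ x : V, ‖(T - S) x‖ ≤ c * ‖x‖} :=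
    ⟨norm_nonneg _, fun x => by rw [← hD'app]; exact D'.le_opNorm x⟩
  have hd0 : 0 ≤ d := le_csInf ⟨_, hmemD⟩ fun c hc => hc.1
  have hdle : ∀ x : V, ‖(T - S) x‖ ≤ d * ‖x‖ := by
    intro x
    rcases eq_or_ne x 0 with rfl | hx
    · simp
    · have hxp : 0 < ‖x‖ := norm_pos_iff.mpr hx
      have hlb : ‖(T - S) x‖ / ‖x‖ ≤ d :=
        le_csInf ⟨_, hmemD⟩ fun c hc => (div_le_iff₀ hxp).2 (hc.2 x)
      calc ‖(T - S) x‖ = ‖(T - S) x‖ / ‖x‖ * ‖x‖ := by field_simp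
        _ ≤ d * ‖x‖ := mul_le_mul_of_nonneg_right hlb hxp.le
  have hmd : d < m := h
  have hm0 : 0 < m := lt_of_le_of_lt hd0 hmd
  -- the unit sphere is nonempty
  have hTset_ne : {c : ℝ | ∃ x : V, ‖x‖ = 1 ∧ c = ‖T x‖}.Nonempty := by
    by_contra hne
    rw [Set.not_nonempty_iff_eq_empty] at hne
    have : m = 0 := by rw [hm_def, muMin, hne, Real.sInf_empty]
    linarith
  obtain ⟨c₁, x₁, hx₁, _⟩ := hTset_ne
  -- muMin lower bound on each unit vector
  have hTbdd : BddBelow {c : ℝ | ∃ x : V, ‖x‖ = 1 ∧ c = ‖T x‖} := by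
    refine ⟨0, fun c hc => ?_⟩
    obtain ⟨x, _, rfl⟩ := hc
    exact norm_nonneg _
  have hmle : ∀ x : V, ‖x‖ = 1 → m ≤ ‖T x‖ := fun x hx =>
    csInf_le hTbdd ⟨x, hx, rfl⟩
  -- m * ‖x‖ ≤ ‖T x‖ for all x
  have hmx : ∀ x : V, m * ‖x‖ ≤ ‖T x‖ := by
    intro x
    rcases eq_or_ne x 0 with rfl | hx
    · simp
    · have hxp : 0 < ‖x‖ := norm_pos_iff.mpr hx
      set u : V := (‖x‖⁻¹ : ℝ) • x with hu_def
      have hu : ‖u‖ = 1 := by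
        rw [hu_def, norm_smul, norm_inv, Real.norm_eq_abs, abs_of_pos hxp,
          inv_mul_cancel₀ hxp.ne']
      have hTu : T u = (‖x‖⁻¹ : ℝ) • T x := map_smul T' (‖x‖⁻¹ : ℝ) x
      have h1 : m ≤ ‖T u‖ := hmle u hu
      rw [hTu, norm_smul, norm_inv, Real.norm_eq_abs, abs_of_pos hxp] at h1
      calc m * ‖x‖ ≤ ‖x‖⁻¹ * ‖T x‖ * ‖x‖ := mul_le_mul_of_nonneg_right h1 hxp.le
        _ = ‖T x‖ := by field_simp
  -- first part : muMin S ≥ m - d > 0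
  have hSlow : ∀ x : V, ‖x‖ = 1 → m - d ≤ ‖S x‖ := by
    intro x hx
    have h1 : m ≤ ‖T x‖ := hmle x hx
    have h2 : ‖(T - S) x‖ ≤ d := by
      have := hdle x; rw [hx, mul_one] at this; exact this
    have h3 : (T - S) x = T x - S x := by
      simp [ContinuousLinearMap.sub_apply]
    have h4 : ‖T x‖ - ‖S x‖ ≤ ‖T x - S x‖ := norm_sub_norm_le _ _
    rw [h3] at h2
    linarith
  have hmuS : m - d ≤ muMin S := by
    refine le_csInf ⟨‖S x₁‖, x₁, hx₁, rfl⟩ ?_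
    rintro c ⟨x, hx, rfl⟩
    exact hSlow x hx
  have hmuS0 : 0 < muMin S := lt_of_lt_of_le (by linarith) hmuS
  refine ⟨hmuS0, ?_⟩
  -- second part
  intro hss
  obtain ⟨z, hzT, hzS⟩ := Set.exists_of_ssubset hss
  have hsub := hss.1
  -- closed ℝ-submodule closures of ranges
  set RS : Submodule ℝ V := (LinearMap.range (S' : V →ₗ[ℝ] V)).topologicalClosure with hRS_def
  have hRS_coe : (RS : Set V) = closure (Set.range ⇑S) := by
    rw [hRS_def, Submodule.topologicalClosure_coe]
    exact congrArg closure (LinearMap.coe_range _)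
  have hRS_closed : IsClosed (RS : Set V) :=
    Submodule.isClosed_topologicalClosure _
  have hzRS : z ∉ (RS : Set V) := by rw [hRS_coe]; exact hzS
  have hRS_ne : (RS : Set V).Nonempty := ⟨0, RS.zero_mem⟩
  set δ := Metric.infDist z (RS : Set V) with hδ_def
  have hδ0 : 0 < δ := (hRS_closed.notMem_iff_infDist_pos hRS_ne).1 hzRS
  set ε := δ * (m - d) / (6 * m) with hε_def
  have hε0 : 0 < ε := by
    apply div_pos (mul_pos hδ0 (by linarith)) (by linarith)
  -- choose y₀ ∈ RS close to z
  obtain ⟨y₀, hy₀RS, hy₀⟩ := (Metric.infDist_lt_iff hRS_ne).1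
    (show Metric.infDist z (RS : Set V) < δ + ε by rw [← hδ_def]; linarith)
  set x₀ := z - y₀ with hx₀_def
  have hx₀norm : ‖x₀‖ < δ + ε := by rw [hx₀_def, ← dist_eq_norm]; exact hy₀
  -- x₀ ∈ closure (range T)
  have hy₀T : y₀ ∈ closure (Set.range ⇑T) := hsub (by rw [← hRS_coe]; exact hy₀RS)
  have hx₀T : x₀ ∈ closure (Set.range ⇑T) := by
    set RT : Submodule ℝ V := (LinearMap.range (T' : V →ₗ[ℝ] V)).topologicalClosure with hRT_def
    have hRT_coe : (RT : Set V) = closure (Set.range ⇑T) := by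
      rw [hRT_def, Submodule.topologicalClosure_coe]
      exact congrArg closure (LinearMap.coe_range _)
    rw [← hRT_coe] at hzT hy₀T ⊢
    exact RT.sub_mem hzT hy₀T
  -- approximate x₀ by T x
  rw [Metric.mem_closure_iff] at hx₀T
  obtain ⟨w, ⟨x, rfl⟩, hw⟩ := hx₀T ε hε0
  rw [dist_comm, dist_eq_norm] at hw
  -- key estimates
  have hSx : y₀ + S x ∈ (RS : Set V) := by
    refine RS.add_mem hy₀RS ?_
    show S x ∈ (RS : Set V)
    rw [hRS_coe]
    exact subset_closure ⟨x, rfl⟩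
  have h1 : δ ≤ ‖x₀ - S x‖ := by
    have := Metric.infDist_le_dist_of_mem (x := z) hSx
    rw [dist_eq_norm] at this
    have heq : z - (y₀ + S x) = x₀ - S x := by rw [hx₀_def]; abel
    rw [heq] at this
    exact this
  have h2 : ‖x₀ - S x‖ ≤ ‖x₀ - T x‖ + ‖T x - S x‖ := by
    have : x₀ - S x = (x₀ - T x) + (T x - S x) := by abel
    rw [this]; exact norm_add_le _ _
  have h3 : ‖T x - S x‖ ≤ d * ‖x‖ := by
    have := hdle x
    simpa [ContinuousLinearMap.sub_apply] using this
  have h4 : m * ‖x‖ ≤ ‖T x‖ := hmx x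
  have h5 : ‖T x‖ ≤ ‖T x - x₀‖ + ‖x₀‖ := by
    have : T x = (T x - x₀) + x₀ := by abel
    nth_rewrite 1 [this]; exact norm_add_le _ _
  have h6 : m * ‖x‖ < δ + 2 * ε := by
    have : ‖T x - x₀‖ = ‖x₀ - T x‖ := norm_sub_rev _ _
    rw [this] at h5
    calc m * ‖x‖ ≤ ‖T x‖ := h4
      _ ≤ ‖x₀ - T x‖ + ‖x₀‖ := h5
      _ < ε + (δ + ε) := by linarith [hx₀norm]
      _ = δ + 2 * ε := by ring
  have h7 : δ ≤ ε + d * ‖x‖ := by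
    have hrev : ‖x₀ - T x‖ = ‖T x - x₀‖ := norm_sub_rev _ _
    linarith [hrev ▸ h2]
  have h8 : d * (m * ‖x‖) ≤ d * (δ + 2 * ε) := mul_le_mul_of_nonneg_left h6.le hd0
  have hεeq : 6 * m * ε = δ * (m - d) := by
    rw [hε_def]; field_simp
  -- final contradiction
  nlinarith [mul_le_mul_of_nonneg_left h7 hm0.le, mul_pos hδ0 (show (0:ℝ) < m - d by linarith),
    mul_le_mul_of_nonneg_left hε0.le hd0, mul_pos hε0 hm0]
end

section
/- Let V be a right Banach ℍ-module and T, S ∈ B(V). If ‖T − S‖ < μ(T)/2, then the closure of R(S) is not a proper subset of the closure of R(T) and the closure of R(T) is not a proper subset of the closure of R(S). -/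
/-!
Quaternionic setting: `ℍ` is the real quaternions.  A right Banach `ℍ`-module is
formalized as a real Banach space `V` together with a compatible `Module ℍᵐᵒᵖ V`
structure (right `ℍ`-action) satisfying `‖x • q‖ = ‖x‖ * |q|`; bounded right
`ℍ`-linear operators are the continuous `ℍᵐᵒᵖ`-linear maps `V →L[ℍᵐᵒᵖ] V`.
-/

open MulOpposite

section Aux

variable {V : Type*} [NormedAddCommGroup V] [NormedSpace ℝ V]
  [Module ℍᵐᵒᵖ V] [IsScalarTower ℝ ℍᵐᵒᵖ V]

lemma opNorm_nonneg' (A : V →L[ℍᵐᵒᵖ] V) : 0 ≤ opNorm A :=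
  Real.sInf_nonneg (fun _ hc => hc.1)

lemma opNorm_bound' (A : V →L[ℍᵐᵒᵖ] V) (x : V) : ‖A x‖ ≤ opNorm A * ‖x‖ := by
  have hmem : ‖A.restrictScalars ℝ‖ ∈ {c : ℝ | 0 ≤ c ∧ ∀ x : V, ‖A x‖ ≤ c * ‖x‖} :=
    ⟨norm_nonneg _, fun x => (A.restrictScalars ℝ).le_opNorm x⟩
  rcases eq_or_ne x 0 with rfl | hx
  · simp
  · have hx0 : (0:ℝ) < ‖x‖ := norm_pos_iff.mpr hx
    have : ‖A x‖ / ‖x‖ ≤ opNorm A := by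
      apply le_csInf ⟨_, hmem⟩
      intro c hc
      exact (div_le_iff₀ hx0).mpr (hc.2 x)
    calc ‖A x‖ = ‖A x‖ / ‖x‖ * ‖x‖ := by field_simp
    _ ≤ opNorm A * ‖x‖ := by gcongr

lemma muMin_bound' [Nontrivial V] (T : V →L[ℍᵐᵒᵖ] V) (x : V) :
    muMin T * ‖x‖ ≤ ‖T x‖ := by
  have hbdd : BddBelow {c : ℝ | ∃ x : V, ‖x‖ = 1 ∧ c = ‖T x‖} :=
    ⟨0, fun c ⟨x, _, hc⟩ => hc ▸ norm_nonneg _⟩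
  rcases eq_or_ne x 0 with rfl | hx
  · simp
  · have hx0 : (0:ℝ) < ‖x‖ := norm_pos_iff.mpr hx
    set u : V := ‖x‖⁻¹ • x with hu
    have hun : ‖u‖ = 1 := by
      rw [hu, norm_smul, norm_inv, norm_norm]
      field_simp
    have h1 : muMin T ≤ ‖T u‖ := csInf_le hbdd ⟨u, hun, rfl⟩
    have hTu : T u = ‖x‖⁻¹ • T x := (T.restrictScalars ℝ).map_smul (‖x‖⁻¹) x
    rw [hTu, norm_smul, norm_inv, norm_norm] at h1
    calc muMin T * ‖x‖ ≤ ‖x‖⁻¹ * ‖T x‖ * ‖x‖ := by gcongr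
    _ = ‖T x‖ := by field_simp

/-- Key lemma: if every element of `B` is proportionally close to the closed
submodule `A` with ratio `c < 1`, then `A` is not a proper subset of `B`. -/
lemma key_not_ssubset (A B : Submodule ℝ V) (hA : IsClosed (A : Set V)) {c : ℝ}
    (hc : c < 1) (hd : ∀ z ∈ B, Metric.infDist z (A : Set V) ≤ c * ‖z‖) :
    ¬ ((A : Set V) ⊂ (B : Set V)) := by
  rintro ⟨hsub, hne⟩
  obtain ⟨x₀, hx₀B, hx₀A⟩ : ∃ x₀, x₀ ∈ (B : Set V) ∧ x₀ ∉ (A : Set V) :=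
    Set.not_subset.mp hne
  have hAne : (A : Set V).Nonempty := ⟨0, A.zero_mem⟩
  set d := Metric.infDist x₀ (A : Set V) with hdd
  have hd0 : 0 < d := (hA.notMem_iff_infDist_pos hAne).mp hx₀A
  rcases le_or_gt c 0 with hc0 | hc0
  · have := hd x₀ hx₀B
    have : d ≤ 0 := this.trans (mul_nonpos_of_nonpos_of_nonneg hc0 (norm_nonneg _))
    linarith
  · have hdc : d < d / c := by
      rw [lt_div_iff₀ hc0]
      nlinarith
    obtain ⟨y, hyA, hy⟩ : ∃ y ∈ (A : Set V), dist x₀ y < d / c :=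
      (Metric.infDist_lt_iff hAne).mp (by rw [← hdd]; exact hdc)
    have hxB : x₀ - y ∈ B := B.sub_mem hx₀B (hsub hyA)
    -- `d ≤ infDist (x₀ - y) A` by translation invariance
    have h1 : d ≤ Metric.infDist (x₀ - y) (A : Set V) := by
      by_contra hlt
      push_neg at hlt
      obtain ⟨a, haA, ha⟩ := (Metric.infDist_lt_iff hAne).mp hlt
      have hmem : a + y ∈ (A : Set V) := A.add_mem haA hyA
      have h2 : d ≤ dist x₀ (a + y) := Metric.infDist_le_dist_of_mem hmem
      have h3 : dist x₀ (a + y) = dist (x₀ - y) a := by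
        rw [dist_eq_norm, dist_eq_norm]
        congr 1
        abel
      linarith [h3 ▸ h2]
    have h2 : Metric.infDist (x₀ - y) (A : Set V) ≤ c * ‖x₀ - y‖ := hd _ hxB
    have h3 : ‖x₀ - y‖ = dist x₀ y := (dist_eq_norm x₀ y).symm
    have h4 : c * dist x₀ y < c * (d / c) := by gcongr
    rw [mul_div_cancel₀ _ (ne_of_gt hc0)] at h4
    rw [h3] at h2
    linarith

/-- The closure of the range of a continuous `ℍᵐᵒᵖ`-linear map, as a closed
real submodule. -/
noncomputable def clRange (A : V →L[ℍᵐᵒᵖ] V) : Submodule ℝ V :=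
  (LinearMap.range ((A.restrictScalars ℝ : V →L[ℝ] V) : V →ₗ[ℝ] V)).topologicalClosure

lemma clRange_coe (A : V →L[ℍᵐᵒᵖ] V) :
    (clRange A : Set V) = closure (Set.range ⇑A) := by
  have : (LinearMap.range ((A.restrictScalars ℝ : V →L[ℝ] V) : V →ₗ[ℝ] V) : Set V)
      = Set.range ⇑A := by
    ext z
    simp [LinearMap.mem_range]
  rw [clRange, Submodule.topologicalClosure_coe, this]

lemma infDist_range_le (A B : V →L[ℍᵐᵒᵖ] V) {c : ℝ} (hc : 0 ≤ c)
    (h : ∀ x : V, Metric.infDist (A x) (Set.range ⇑B) ≤ c * ‖A x‖) :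
    ∀ z ∈ clRange A, Metric.infDist z (clRange B : Set V) ≤ c * ‖z‖ := by
  intro z hz
  have hz' : z ∈ closure (Set.range ⇑A) := by rw [← clRange_coe A]; exact hz
  rw [show (clRange B : Set V) = closure (Set.range ⇑B) from clRange_coe B,
    Metric.infDist_closure]
  have hclosed : IsClosed {z : V | Metric.infDist z (Set.range ⇑B) ≤ c * ‖z‖} :=
    isClosed_le (Metric.continuous_infDist_pt _) (continuous_const.mul continuous_norm)
  have hsub : Set.range ⇑A ⊆ {z : V | Metric.infDist z (Set.range ⇑B) ≤ c * ‖z‖} := by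
    rintro _ ⟨x, rfl⟩
    exact h x
  exact hclosed.closure_subset_iff.mpr hsub hz'

end Aux

theorem stmt11 {V : Type*} [NormedAddCommGroup V] [NormedSpace ℝ V] [CompleteSpace V]
    [Module ℍᵐᵒᵖ V] [IsScalarTower ℝ ℍᵐᵒᵖ V] [SMulCommClass ℍᵐᵒᵖ ℝ V]
    (hnorm : ∀ (x : V) (q : ℍ), ‖op q • x‖ = ‖x‖ * ‖q‖)
    (T S : V →L[ℍᵐᵒᵖ] V) (h : opNorm (T - S) < muMin T / 2) :
    ¬ (closure (Set.range ⇑S) ⊂ closure (Set.range ⇑T)) ∧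
      ¬ (closure (Set.range ⇑T) ⊂ closure (Set.range ⇑S)) := by
    -- trivial case
  rcases subsingleton_or_nontrivial V with hV | hV
  · have hST : Set.range ⇑S = Set.range ⇑T := by
      ext z
      constructor
      · rintro ⟨x, rfl⟩; exact ⟨x, Subsingleton.elim _ _⟩
      · rintro ⟨x, rfl⟩; exact ⟨x, Subsingleton.elim _ _⟩
    rw [hST]
    exact ⟨fun hs => hs.2 hs.1, fun hs => hs.2 hs.1⟩
  set μ := muMin T with hμdef
  set ε := opNorm (T - S) with hεdef
  have hε0 : 0 ≤ ε := opNorm_nonneg' _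
  have hμ0 : 0 < μ := by linarith
  have hTS : ∀ x : V, ‖T x - S x‖ ≤ ε * ‖x‖ := by
    intro x
    simpa using opNorm_bound' (T - S) x
  have hμb : ∀ x : V, μ * ‖x‖ ≤ ‖T x‖ := muMin_bound' T
  have hcl : ∀ (A : V →L[ℍᵐᵒᵖ] V), IsClosed ((clRange A : Submodule ℝ V) : Set V) := by
    intro A
    rw [clRange_coe]
    exact isClosed_closure
  constructor
  · -- ¬ closure (range S) ⊂ closure (range T)
    rw [← clRange_coe S, ← clRange_coe T]
    refine key_not_ssubset (clRange S) (clRange T) (hcl S) (c := ε / μ) ?_ ?_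
    · rw [div_lt_one hμ0]; linarith
    · apply infDist_range_le T S (div_nonneg hε0 hμ0.le)
      intro x
      have h1 : Metric.infDist (T x) (Set.range ⇑S) ≤ ‖T x - S x‖ := by
        simpa [dist_eq_norm] using Metric.infDist_le_dist_of_mem (Set.mem_range_self x) (x := T x)
      have h2 : ε * ‖x‖ = ε / μ * (μ * ‖x‖) := by field_simp
      calc Metric.infDist (T x) (Set.range ⇑S) ≤ ε * ‖x‖ := h1.trans (hTS x)
      _ = ε / μ * (μ * ‖x‖) := h2
      _ ≤ ε / μ * ‖T x‖ := mul_le_mul_of_nonneg_left (hμb x) (div_nonneg hε0 hμ0.le)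
  · -- ¬ closure (range T) ⊂ closure (range S)
    rw [← clRange_coe S, ← clRange_coe T]
    have hμε : 0 < μ - ε := by linarith
    refine key_not_ssubset (clRange T) (clRange S) (hcl T) (c := ε / (μ - ε)) ?_ ?_
    · rw [div_lt_one hμε]; linarith
    · apply infDist_range_le S T (div_nonneg hε0 hμε.le)
      intro x
      have h1 : Metric.infDist (S x) (Set.range ⇑T) ≤ ‖T x - S x‖ := by
        have := Metric.infDist_le_dist_of_mem (Set.mem_range_self (f := ⇑T) x) (x := S x)
        rwa [dist_eq_norm, norm_sub_rev] at this
      have h3 : (μ - ε) * ‖x‖ ≤ ‖S x‖ := by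
        have h4 : ‖T x‖ ≤ ‖S x‖ + ε * ‖x‖ := by
          calc ‖T x‖ = ‖S x + (T x - S x)‖ := by congr 1; abel
          _ ≤ ‖S x‖ + ‖T x - S x‖ := norm_add_le _ _
          _ ≤ ‖S x‖ + ε * ‖x‖ := by linarith [hTS x]
        have := hμb x
        nlinarith
      have h2 : ε * ‖x‖ = ε / (μ - ε) * ((μ - ε) * ‖x‖) := by field_simp
      calc Metric.infDist (S x) (Set.range ⇑T) ≤ ε * ‖x‖ := h1.trans (hTS x)
      _ = ε / (μ - ε) * ((μ - ε) * ‖x‖) := h2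
      _ ≤ ε / (μ - ε) * ‖S x‖ := mul_le_mul_of_nonneg_left h3 (div_nonneg hε0 hμε.le)
end

section
/- Let V be a right Banach ℍ-module, T ∈ B(V) and q₀ ∈ ρ_S(T). Then every q ∈ ℍ satisfying 2 |Re(q) − Re(q₀)| ‖T‖ + | |q|² − |q₀|² | < μ(Q_{q₀}(T)) belongs to ρ_S(T). -/
/-!
Quaternionic setting: `ℍ` is the real quaternions.  A right Banach `ℍ`-module is
formalized as a real Banach space `V` together with a compatible `Module ℍᵐᵒᵖ V`
structure (right `ℍ`-action) satisfying `‖x • q‖ = ‖x‖ * |q|`; bounded right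
`ℍ`-linear operators are the continuous `ℍᵐᵒᵖ`-linear maps `V →L[ℍᵐᵒᵖ] V`.
-/

open MulOpposite

/-!
Write `Q_q(T) = Q_{q₀}(T) + D` with `D = 2 (Re q₀ - Re q) T + (|q|² - |q₀|²) I`; the hypothesis
bounds `‖D‖` strictly by `μ(A)`, `A = Q_{q₀}(T)`. Since `μ(A) ‖A⁻¹ y‖ ≤ ‖A A⁻¹ y‖ = ‖y‖`, we get
`‖A⁻¹‖ ≤ μ(A)⁻¹`, hence `‖A⁻¹ D‖ < 1` and `A + D = A (I + A⁻¹ D)` is invertible by the Neumann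
series. The series is summed in the real Banach algebra of bounded `ℝ`-linear operators; the
inverse it produces is `ℍ`-linear because it inverts an `ℍ`-linear bijection.
-/

namespace ContinuousLinearMap

variable {R S M : Type*} [Ring R] [Ring S] [AddCommGroup M] [Module R M] [Module S M]
  [TopologicalSpace M] [ContinuousAdd M] [LinearMap.CompatibleSMul M M R S]

theorem isUnit_of_isUnit_restrictScalars {f : M →L[S] M} (h : IsUnit (f.restrictScalars R)) :
    IsUnit f := by
  obtain ⟨u, hu⟩ := h
  have hgf (x : M) : (↑u⁻¹ : M →L[R] M) (f x) = x := by
    change ((↑u⁻¹ : M →L[R] M) * f.restrictScalars R) x = x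
    rw [← hu, u.inv_mul]; rfl
  have hfg (x : M) : f ((↑u⁻¹ : M →L[R] M) x) = x := by
    change (f.restrictScalars R * (↑u⁻¹ : M →L[R] M)) x = x
    rw [← hu, u.mul_inv]; rfl
  let g : M →L[S] M :=
    { toFun := (↑u⁻¹ : M →L[R] M)
      map_add' := map_add _
      map_smul' s x := by
        conv_lhs => rw [← hfg x, ← f.map_smul]
        exact hgf _
      cont := (↑u⁻¹ : M →L[R] M).cont }
  exact ⟨⟨f, g, ext hfg, ext hgf⟩, rfl⟩

end ContinuousLinearMap

theorem Qs_sub_Qs {W : Type*} [NormedAddCommGroup W] [Module ℍᵐᵒᵖ W] [Module ℝ W]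
    [SMulCommClass ℍᵐᵒᵖ ℝ W] [ContinuousConstSMul ℝ W] (T : W →L[ℍᵐᵒᵖ] W) (p q : ℍ) :
    Qs T p - Qs T q = (2 * (q.re - p.re)) • T + (‖p‖ ^ 2 - ‖q‖ ^ 2) • (1 : W →L[ℍᵐᵒᵖ] W) := by
  unfold Qs
  module

section RightBanachModule

variable {V : Type*} [NormedAddCommGroup V] [NormedSpace ℝ V]
  [Module ℍᵐᵒᵖ V] [IsScalarTower ℝ ℍᵐᵒᵖ V]

theorem muMin_mul_norm_le (A : V →L[ℍᵐᵒᵖ] V) (x : V) : muMin A * ‖x‖ ≤ ‖A x‖ := by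
  rcases eq_or_ne x 0 with rfl | hx
  · simp
  have hx' : 0 < ‖x‖ := norm_pos_iff.mpr hx
  have hbdd : BddBelow {c : ℝ | ∃ y : V, ‖y‖ = 1 ∧ c = ‖A y‖} :=
    ⟨0, by rintro _ ⟨y, -, rfl⟩; exact norm_nonneg _⟩
  have h : muMin A ≤ ‖A (‖x‖⁻¹ • x)‖ :=
    csInf_le hbdd ⟨_, by rw [norm_smul, norm_inv, norm_norm, inv_mul_cancel₀ hx'.ne'], rfl⟩
  rwa [ContinuousLinearMap.map_smul_of_tower, norm_smul, norm_inv, norm_norm,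
    le_inv_mul_iff₀ hx', mul_comm] at h

theorem norm_restrictScalars_inv_le (u : (V →L[ℍᵐᵒᵖ] V)ˣ) (hu : 0 < muMin (u : V →L[ℍᵐᵒᵖ] V)) :
    ‖(↑u⁻¹ : V →L[ℍᵐᵒᵖ] V).restrictScalars ℝ‖ ≤ (muMin (u : V →L[ℍᵐᵒᵖ] V))⁻¹ :=
  ContinuousLinearMap.opNorm_le_bound _ (inv_nonneg.mpr hu.le) fun y => by
    have hy : (u : V →L[ℍᵐᵒᵖ] V) ((↑u⁻¹ : V →L[ℍᵐᵒᵖ] V) y) = y := DFunLike.congr_fun u.mul_inv y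
    rw [le_inv_mul_iff₀ hu]
    exact (muMin_mul_norm_le _ _).trans_eq (congrArg norm hy)

theorem isUnit_add_of_norm_lt_muMin [CompleteSpace V] {A : V →L[ℍᵐᵒᵖ] V} (hA : IsUnit A)
    (D : V →L[ℍᵐᵒᵖ] V) (hD : ‖D.restrictScalars ℝ‖ < muMin A) : IsUnit (A + D) := by
  obtain ⟨u, rfl⟩ := hA
  have hμ : 0 < muMin (u : V →L[ℍᵐᵒᵖ] V) := (norm_nonneg _).trans_lt hD
  have hsmall : ‖(↑u⁻¹ : V →L[ℍᵐᵒᵖ] V).restrictScalars ℝ * D.restrictScalars ℝ‖ < 1 :=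
    calc ‖(↑u⁻¹ : V →L[ℍᵐᵒᵖ] V).restrictScalars ℝ * D.restrictScalars ℝ‖
        ≤ ‖(↑u⁻¹ : V →L[ℍᵐᵒᵖ] V).restrictScalars ℝ‖ * ‖D.restrictScalars ℝ‖ := norm_mul_le _ _
      _ ≤ (muMin (u : V →L[ℍᵐᵒᵖ] V))⁻¹ * ‖D.restrictScalars ℝ‖ := by
        gcongr
        exact norm_restrictScalars_inv_le u hμ
      _ < (muMin (u : V →L[ℍᵐᵒᵖ] V))⁻¹ * muMin (u : V →L[ℍᵐᵒᵖ] V) := by gcongr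
      _ = 1 := inv_mul_cancel₀ hμ.ne'
  have hunit : IsUnit (1 + ↑u⁻¹ * D : V →L[ℍᵐᵒᵖ] V) := by
    refine ContinuousLinearMap.isUnit_of_isUnit_restrictScalars (R := ℝ) ?_
    rw [← sub_neg_eq_add]
    exact isUnit_one_sub_of_norm_lt_one ((norm_neg _).trans_lt hsmall)
  have hfactor : (u : V →L[ℍᵐᵒᵖ] V) + D = u * (1 + ↑u⁻¹ * D) := by
    rw [mul_add, mul_one, ← mul_assoc, u.mul_inv, one_mul]
  rw [hfactor]
  exact u.isUnit.mul hunit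

theorem norm_restrictScalars_Qs_sub_le (T : V →L[ℍᵐᵒᵖ] V) (p q : ℍ) :
    ‖(Qs T p - Qs T q).restrictScalars ℝ‖ ≤
      2 * |p.re - q.re| * opNorm T + |‖p‖ ^ 2 - ‖q‖ ^ 2| := by
  rw [Qs_sub_Qs]
  calc ‖((2 * (q.re - p.re)) • T + (‖p‖ ^ 2 - ‖q‖ ^ 2) • (1 : V →L[ℍᵐᵒᵖ] V)).restrictScalars ℝ‖
      = ‖(2 * (q.re - p.re)) • T.restrictScalars ℝ + (‖p‖ ^ 2 - ‖q‖ ^ 2) • (1 : V →L[ℝ] V)‖ := rfl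
    _ ≤ |2 * (q.re - p.re)| * ‖T.restrictScalars ℝ‖ + |‖p‖ ^ 2 - ‖q‖ ^ 2| * ‖(1 : V →L[ℝ] V)‖ := by
      refine (norm_add_le _ _).trans_eq ?_
      rw [norm_smul, norm_smul, Real.norm_eq_abs, Real.norm_eq_abs]
    _ ≤ 2 * |p.re - q.re| * ‖T.restrictScalars ℝ‖ + |‖p‖ ^ 2 - ‖q‖ ^ 2| := by
      rw [abs_mul, abs_two, abs_sub_comm]
      gcongr
      exact mul_le_of_le_one_right (abs_nonneg _) ContinuousLinearMap.norm_id_le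

end RightBanachModule

theorem stmt12_general {V : Type*} [NormedAddCommGroup V] [NormedSpace ℝ V] [CompleteSpace V]
    [Module ℍᵐᵒᵖ V] [IsScalarTower ℝ ℍᵐᵒᵖ V] [SMulCommClass ℍᵐᵒᵖ ℝ V]
    (T : V →L[ℍᵐᵒᵖ] V) (q₀ : ℍ) (hq₀ : q₀ ∈ sResolvent T) :
    ∀ q : ℍ, 2 * |q.re - q₀.re| * opNorm T + |‖q‖ ^ 2 - ‖q₀‖ ^ 2| < muMin (Qs T q₀) →
      q ∈ sResolvent T := by
  intro q hq
  have hunit := isUnit_add_of_norm_lt_muMin hq₀ (Qs T q - Qs T q₀)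
    ((norm_restrictScalars_Qs_sub_le T q q₀).trans_lt hq)
  rwa [add_sub_cancel] at hunit

theorem stmt12 {V : Type*} [NormedAddCommGroup V] [NormedSpace ℝ V] [CompleteSpace V]
    [Module ℍᵐᵒᵖ V] [IsScalarTower ℝ ℍᵐᵒᵖ V] [SMulCommClass ℍᵐᵒᵖ ℝ V]
    (hnorm : ∀ (x : V) (q : ℍ), ‖op q • x‖ = ‖x‖ * ‖q‖)
    (T : V →L[ℍᵐᵒᵖ] V) (q₀ : ℍ) (hq₀ : q₀ ∈ sResolvent T) :
    ∀ q : ℍ, 2 * |q.re - q₀.re| * opNorm T + |‖q‖ ^ 2 - ‖q₀‖ ^ 2| < muMin (Qs T q₀) →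
      q ∈ sResolvent T :=
  stmt12_general T q₀ hq₀
end

section
/- Let V be a right Banach ℍ-module, T ∈ B(V) and K ∈ B(V) a compact operator. Then σ_e^S(T + K) = σ_e^S(T). -/
/-!
Quaternionic setting: `ℍ` is the real quaternions.  A right Banach `ℍ`-module is
formalized as a real Banach space `V` together with a compatible `Module ℍᵐᵒᵖ V`
structure (right `ℍ`-action) satisfying `‖x • q‖ = ‖x‖ * |q|`; bounded right
`ℍ`-linear operators are the continuous `ℍᵐᵒᵖ`-linear maps `V →L[ℍᵐᵒᵖ] V`.
-/

open MulOpposite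

section Proof

variable {V : Type*} [NormedAddCommGroup V] [NormedSpace ℝ V]
  [Module ℍᵐᵒᵖ V] [IsScalarTower ℝ ℍᵐᵒᵖ V] [SMulCommClass ℍᵐᵒᵖ ℝ V]

lemma isCompactOp_iff' (K : V →L[ℍᵐᵒᵖ] V) : IsCompactOp K ↔ IsCompactOperator ⇑K := by
  have h := (isCompactOperator_iff_isCompact_closure_image_closedBall
    ((K : V →ₗ[ℍᵐᵒᵖ] V).restrictScalars ℝ) (zero_lt_one)).symm
  simpa [IsCompactOp, LinearMap.coe_restrictScalars] using h

lemma quasiInverse_add_compact (A C S : V →L[ℍᵐᵒᵖ] V) (hC : IsCompactOperator ⇑C)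
    (hS : IsQuasiInverse S A) : IsQuasiInverse S (A + C) := by
  obtain ⟨K₁, K₂, h1, h2, e1, e2⟩ := hS
  rw [isCompactOp_iff'] at h1 h2
  refine ⟨K₁ - S * C, K₂ - C * S, ?_, ?_, ?_, ?_⟩
  · rw [isCompactOp_iff']
    have : ⇑(K₁ - S * C) = ⇑K₁ - ⇑S ∘ ⇑C := by
      ext x; simp [ContinuousLinearMap.mul_apply]
    rw [this]
    exact h1.sub (hC.continuous_comp S.continuous)
  · rw [isCompactOp_iff']
    have : ⇑(K₂ - C * S) = ⇑K₂ - ⇑C ∘ ⇑S := by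
      ext x; simp [ContinuousLinearMap.mul_apply]
    rw [this]
    exact h2.sub (hC.comp_clm S)
  · rw [mul_add, e1]; abel
  · rw [add_mul, e2]; abel

lemma Qs_add (T K : V →L[ℍᵐᵒᵖ] V) (q : ℍ) :
    Qs (T + K) q = Qs T q + (T * K + K * T + K * K - (2 * q.re) • K) := by
  simp only [Qs, mul_add, add_mul, smul_add]
  abel

lemma ess_subset (T K : V →L[ℍᵐᵒᵖ] V) (hK : IsCompactOp K) :
    essSpectrum (T + K) ⊆ essSpectrum T := by
  intro q hq
  rw [isCompactOp_iff'] at hK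
  intro ⟨S, hS⟩
  refine hq ⟨S, ?_⟩
  rw [Qs_add]
  apply quasiInverse_add_compact _ _ _ _ hS
  have : ⇑(T * K + K * T + K * K - (2 * q.re) • K)
      = (⇑T ∘ ⇑K + ⇑K ∘ ⇑T + ⇑K ∘ ⇑K) - (2 * q.re) • ⇑K := by
    ext x; simp [ContinuousLinearMap.mul_apply]
  rw [this]
  exact (((hK.clm_comp T).add (hK.comp_clm T)).add (hK.comp_clm K)).sub (hK.smul _)

end Proof

theorem stmt16 {V : Type*} [NormedAddCommGroup V] [NormedSpace ℝ V] [CompleteSpace V]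
    [Module ℍᵐᵒᵖ V] [IsScalarTower ℝ ℍᵐᵒᵖ V] [SMulCommClass ℍᵐᵒᵖ ℝ V]
    (hnorm : ∀ (x : V) (q : ℍ), ‖op q • x‖ = ‖x‖ * ‖q‖)
    (T K : V →L[ℍᵐᵒᵖ] V) (hK : IsCompactOp K) :
    essSpectrum (T + K) = essSpectrum T := by
  apply subset_antisymm
  · exact ess_subset T K hK
  · have hK' : IsCompactOp (-K) := by
      rw [isCompactOp_iff'] at hK ⊢
      have : ⇑(-K) = -⇑K := by ext x; simp
      rw [this]; exact hK.neg
    have := ess_subset (T + K) (-K) hK'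
    simpa using this
end
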